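/- arXiv:1903.06871 — 6 statements merged into one kernel-verified Lean document; each statement's English description precedes it below -/
import Mathlib

section
/- For every iteration t ≥ 1 of the asynchronous distributed algorithm, the following descent-type inequality for the nonsmooth part holds: (ρ/2)‖x^{t+1} − x^t‖² + h(x^{t+1}) − (ρ/2)‖x^t − x^{t−1}‖² − h(x^t) ≤ −⟨∇L_1(x^{t+1}) + (1/m)Σ_{j=1}^m ∇L_j(x^{t_j(t)}) − ∇L_1(x^{t_1(t)}), Δ^{(t)}⟩ − (γ/2)‖Δ^{(t)}‖² − (ρ/2)‖Δ^{(t−1)}‖². -/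
open scoped RealInnerProductSpace
open Filter Topology

set_option maxHeartbeats 1000000 in
theorem stmt_0
    {p m τ : ℕ} (hp : 1 ≤ p) (hm : 0 < m)
    {L ρ γ : ℝ}
    (hL : 0 < L) (hρ : 0 < ρ) (hγ : 0 < γ)
    (Lf : Fin m → EuclideanSpace ℝ (Fin p) → ℝ)
    (hdiff : ∀ j, Differentiable ℝ (Lf j))
    (hlip : ∀ j (u v : EuclideanSpace ℝ (Fin p)), ‖gradient (Lf j) u - gradient (Lf j) v‖ ≤ L * ‖u - v‖)
    (h : EuclideanSpace ℝ (Fin p) → ℝ)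
    (hconv : ConvexOn ℝ Set.univ h)
    (hstrong : ∀ z : EuclideanSpace ℝ (Fin p), StrongConvexOn Set.univ γ (fun y => h y + ρ / 2 * ‖y - z‖ ^ 2))
    (tj : ℕ → Fin m → ℕ)
    (htj : ∀ t j, t - τ ≤ tj t j ∧ tj t j ≤ t)
    (x : ℕ → EuclideanSpace ℝ (Fin p))
    (hupdate : ∀ t, ∀ y : EuclideanSpace ℝ (Fin p),
      Lf ⟨0, hm⟩ (x (t + 1)) + h (x (t + 1)) + ρ / 2 * ‖x (t + 1) - x t‖ ^ 2 +
          ⟪((m : ℝ)⁻¹ • ∑ j, gradient (Lf j) (x (tj t j))) - gradient (Lf ⟨0, hm⟩) (x (tj t ⟨0, hm⟩)), x (t + 1) - x t⟫ ≤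
        Lf ⟨0, hm⟩ y + h y + ρ / 2 * ‖y - x t‖ ^ 2 +
          ⟪((m : ℝ)⁻¹ • ∑ j, gradient (Lf j) (x (tj t j))) - gradient (Lf ⟨0, hm⟩) (x (tj t ⟨0, hm⟩)), y - x t⟫)
    (Δ : ℤ → EuclideanSpace ℝ (Fin p))
    (hΔ : ∀ s : ℤ, 0 ≤ s → Δ s = x (s.toNat + 1) - x s.toNat)
    (hΔneg : ∀ s : ℤ, s < 0 → Δ s = 0)
    (t : ℕ) (ht : 1 ≤ t)
    :
    ρ / 2 * ‖x (t + 1) - x t‖ ^ 2 + h (x (t + 1)) - ρ / 2 * ‖x t - x (t - 1)‖ ^ 2 - h (x t) ≤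
      -⟪gradient (Lf ⟨0, hm⟩) (x (t + 1)) + ((m : ℝ)⁻¹ • ∑ j, gradient (Lf j) (x (tj t j))) - gradient (Lf ⟨0, hm⟩) (x (tj t ⟨0, hm⟩)), Δ (t : ℤ)⟫ -
        γ / 2 * ‖Δ (t : ℤ)‖ ^ 2 - ρ / 2 * ‖Δ ((t : ℤ) - 1)‖ ^ 2 := by
  classical
  -- rewrite Δ
  have hDt : Δ (t : ℤ) = x (t + 1) - x t := by
    rw [hΔ _ (by positivity)]; norm_num
  have hDt1 : Δ ((t : ℤ) - 1) = x t - x (t - 1) := by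
    have e0 : (t : ℤ) - 1 = ((t - 1 : ℕ) : ℤ) := by omega
    have e2 : t - 1 + 1 = t := by omega
    rw [e0, hΔ _ (by positivity), Int.toNat_natCast, e2]
  rw [hDt, hDt1]
  set j0 : Fin m := ⟨0, hm⟩ with hj0
  set a := x (t + 1) with ha
  set b := x t with hb
  set d : EuclideanSpace ℝ (Fin p) :=
    ((m : ℝ)⁻¹ • ∑ j, gradient (Lf j) (x (tj t j))) - gradient (Lf j0) (x (tj t j0)) with hd
  set g1 := gradient (Lf j0) a with hg1
  set v := b - a with hv
  have key : (h a + ρ / 2 * ‖a - b‖ ^ 2 + ⟪d, a - b⟫ - h b) + γ / 2 * ‖a - b‖ ^ 2 ≤ ⟪g1, v⟫ := by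
    set A : ℝ := h a + ρ / 2 * ‖a - b‖ ^ 2 + ⟪d, a - b⟫ - h b with hA
    set c : ℝ := γ / 2 * ‖a - b‖ ^ 2 with hc
    -- derivative along the segment
    have hline : HasDerivAt (fun s : ℝ => a + s • v) v 0 := by
      simpa using ((hasDerivAt_id (0 : ℝ)).smul_const v).const_add a
    have hF : HasFDerivAt (Lf j0) (InnerProductSpace.toDual ℝ _ g1) (a + (0 : ℝ) • v) := by
      have := ((hdiff j0) a).hasGradientAt.hasFDerivAt
      rw [zero_smul, add_zero]; exact this
    have hder : HasDerivAt (fun s : ℝ => Lf j0 (a + s • v)) ⟪g1, v⟫ 0 := by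
      have := hF.comp_hasDerivAt 0 hline
      exact this
    have hslope : Tendsto (slope (fun s : ℝ => Lf j0 (a + s • v)) 0) (𝓝[>] (0 : ℝ))
        (𝓝 ⟪g1, v⟫) :=
      (hasDerivAt_iff_tendsto_slope.mp hder).mono_left
        (nhdsWithin_mono _ fun y hy => ne_of_gt hy)
    have hlhs : Tendsto (fun s : ℝ => A + (1 - s) * c) (𝓝[>] (0 : ℝ)) (𝓝 (A + c)) := by
      have hcont : Continuous fun s : ℝ => A + (1 - s) * c := by continuity
      have h0 : Tendsto (fun s : ℝ => A + (1 - s) * c) (𝓝 (0 : ℝ)) (𝓝 (A + (1 - 0) * c)) :=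
        hcont.tendsto 0
      simp only [sub_zero, one_mul] at h0
      exact h0.mono_left nhdsWithin_le_nhds
    refine le_of_tendsto_of_tendsto hlhs hslope ?_
    filter_upwards [Ioc_mem_nhdsGT_of_mem (by constructor <;> norm_num : (0:ℝ) ∈ Set.Ico 0 1)]
      with s hs
    obtain ⟨hs0, hs1⟩ := hs
    set yy : EuclideanSpace ℝ (Fin p) := a + s • v with hyy
    have e1 : yy = (1 - s) • a + s • b := by rw [hyy, hv]; module
    have e2 : yy - b = (1 - s) • (a - b) := by rw [hyy, hv]; module
    have e3 : ⟪d, yy - b⟫ = (1 - s) * ⟪d, a - b⟫ := by rw [e2, real_inner_smul_right]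
    have h1 := hupdate t yy
    rw [← ha, ← hb, ← hd, e3] at h1
    have h2 := (hstrong b).2 (Set.mem_univ a) (Set.mem_univ b)
      (by linarith : (0:ℝ) ≤ 1 - s) hs0.le (by ring)
    rw [← e1] at h2
    simp only [smul_eq_mul, sub_self, norm_zero] at h2
    have hgs : slope (fun s : ℝ => Lf j0 (a + s • v)) 0 s
        = (Lf j0 yy - Lf j0 a) / s := by
      rw [slope_def_field]
      simp [hyy]
    rw [hgs, le_div_iff₀ hs0, hA, hc]
    linarith [h1, h2]
  -- finish
  have hsplit : ⟪g1 + ((m : ℝ)⁻¹ • ∑ j, gradient (Lf j) (x (tj t j))) - gradient (Lf j0) (x (tj t j0)), a - b⟫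
      = ⟪g1, a - b⟫ + ⟪d, a - b⟫ := by
    rw [add_sub_assoc, ← hd, inner_add_left]
  have hneg : ⟪g1, v⟫ = -⟪g1, a - b⟫ := by
    rw [hv, ← inner_neg_right, neg_sub]
  rw [hsplit]
  rw [hneg] at key
  linarith [key]
end

section
/- For every iteration t ≥ 0 and every δ > 0, the asynchrony cross term is bounded as: ⟨(1/m)Σ_{j=1}^m ∇L_j(x^t) − (1/m)Σ_{j=1}^m ∇L_j(x^{t_j(t)}), Δ^{(t)}⟩ + ⟨∇L_1(x^{t_1(t)}) − ∇L_1(x^t), Δ^{(t)}⟩ ≤ (L/δ) Σ_{k=1}^{τ} ‖Δ^{(t−k)}‖² + L δ τ ‖Δ^{(t)}‖². -/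
/-! Each delayed point `x^{t_j(t)}` lies at most `τ` steps behind `x^t`, so by the triangle
inequality `‖x^t - x^{t_j(t)}‖ ≤ S := Σ_{k=1}^{τ} ‖Δ^{(t-k)}‖`. Cauchy–Schwarz and the
Lipschitz gradients bound each of the two inner products by `L S ‖Δ^{(t)}‖`, and Young's
inequality `2 a b ≤ a² / δ + δ b²`, applied termwise to `2 S ‖Δ^{(t)}‖`, gives the claim. -/

open scoped RealInnerProductSpace

open Finset

section Displacement

variable {E : Type*} [SeminormedAddCommGroup E] (x : ℕ → E) (Δ : ℤ → E)

theorem norm_sub_le_sum_norm_Δ (hΔ : ∀ s : ℤ, 0 ≤ s → Δ s = x (s.toNat + 1) - x s.toNat)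
    {t : ℕ} : ∀ n ≤ t, ‖x t - x (t - n)‖ ≤ ∑ k ∈ Icc 1 n, ‖Δ ((t : ℤ) - (k : ℤ))‖
  | 0, _ => by simp
  | n + 1, hn => by
    have hstep : Δ ((t : ℤ) - ((n + 1 : ℕ) : ℤ)) = x (t - n) - x (t - (n + 1)) := by
      rw [hΔ _ (by omega)]
      congr 2 <;> omega
    calc ‖x t - x (t - (n + 1))‖
        ≤ ‖x t - x (t - n)‖ + ‖x (t - n) - x (t - (n + 1))‖ := norm_sub_le_norm_sub_add_norm_sub _ _ _
      _ ≤ ∑ k ∈ Icc 1 n, ‖Δ ((t : ℤ) - (k : ℤ))‖ + ‖Δ ((t : ℤ) - ((n + 1 : ℕ) : ℤ))‖ := by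
        rw [hstep]
        gcongr
        exact norm_sub_le_sum_norm_Δ hΔ n (by omega)
      _ = ∑ k ∈ Icc 1 (n + 1), ‖Δ ((t : ℤ) - (k : ℤ))‖ := (sum_Icc_succ_top (by omega) _).symm

theorem norm_sub_delayed_le (hΔ : ∀ s : ℤ, 0 ≤ s → Δ s = x (s.toNat + 1) - x s.toNat)
    {s t τ : ℕ} (hs : t - τ ≤ s) (hst : s ≤ t) :
    ‖x t - x s‖ ≤ ∑ k ∈ Icc 1 τ, ‖Δ ((t : ℤ) - (k : ℤ))‖ := by
  have hts : t - (t - s) = s := by omega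
  calc ‖x t - x s‖ ≤ ∑ k ∈ Icc 1 (t - s), ‖Δ ((t : ℤ) - (k : ℤ))‖ := by
        simpa only [hts] using norm_sub_le_sum_norm_Δ x Δ hΔ (t := t) (t - s) (by omega)
    _ ≤ ∑ k ∈ Icc 1 τ, ‖Δ ((t : ℤ) - (k : ℤ))‖ :=
        sum_le_sum_of_subset_of_nonneg (Icc_subset_Icc_right (by omega))
          fun _ _ _ => norm_nonneg _

end Displacement

theorem inner_smul_sum_sub_smul_sum_le {E ι : Type*} [NormedAddCommGroup E]
    [InnerProductSpace ℝ E] [Fintype ι] [Nonempty ι] (a b : ι → E) (w : E) {C : ℝ}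
    (h : ∀ i, ⟪a i - b i, w⟫ ≤ C) :
    ⟪(Fintype.card ι : ℝ)⁻¹ • ∑ i, a i - (Fintype.card ι : ℝ)⁻¹ • ∑ i, b i, w⟫ ≤ C := by
  rw [← smul_sub, real_inner_smul_left, ← sum_sub_distrib, sum_inner, inv_mul_le_iff₀ (by positivity)]
  simpa using sum_le_sum fun i (_ : i ∈ univ) => h i

theorem two_mul_sum_mul_le {ι : Type*} (s : Finset ι) (a : ι → ℝ) (b : ℝ) {δ : ℝ} (hδ : 0 < δ) :
    2 * (∑ k ∈ s, a k) * b ≤ (∑ k ∈ s, a k ^ 2) / δ + #s * δ * b ^ 2 := by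
  have young : ∀ k ∈ s, 2 * a k * b ≤ a k ^ 2 / δ + δ * b ^ 2 := fun k _ => by
    rw [div_add' _ _ _ hδ.ne', le_div_iff₀ hδ]
    nlinarith [sq_nonneg (a k - δ * b)]
  calc 2 * (∑ k ∈ s, a k) * b = ∑ k ∈ s, 2 * a k * b := by rw [mul_sum, sum_mul]
    _ ≤ ∑ k ∈ s, (a k ^ 2 / δ + δ * b ^ 2) := sum_le_sum young
    _ = (∑ k ∈ s, a k ^ 2) / δ + #s * δ * b ^ 2 := by
        rw [sum_add_distrib, ← sum_div, sum_const, nsmul_eq_mul, mul_assoc]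

theorem stmt_2_general
    {p m τ : ℕ} (hm : 0 < m)
    {L : ℝ}
    (hL : 0 < L)
    (Lf : Fin m → EuclideanSpace ℝ (Fin p) → ℝ)
    (hlip : ∀ j (u v : EuclideanSpace ℝ (Fin p)), ‖gradient (Lf j) u - gradient (Lf j) v‖ ≤ L * ‖u - v‖)
    (tj : ℕ → Fin m → ℕ)
    (htj : ∀ t j, t - τ ≤ tj t j ∧ tj t j ≤ t)
    (x : ℕ → EuclideanSpace ℝ (Fin p))
    (Δ : ℤ → EuclideanSpace ℝ (Fin p))
    (hΔ : ∀ s : ℤ, 0 ≤ s → Δ s = x (s.toNat + 1) - x s.toNat)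
    (t : ℕ) (δ : ℝ) (hδ : 0 < δ)
    :
    ⟪((m : ℝ)⁻¹ • ∑ i, gradient (Lf i) (x t)) - (m : ℝ)⁻¹ • ∑ i, gradient (Lf i) (x (tj t i)),
        Δ (t : ℤ)⟫ +
      ⟪gradient (Lf ⟨0, hm⟩) (x (tj t ⟨0, hm⟩)) - gradient (Lf ⟨0, hm⟩) (x t), Δ (t : ℤ)⟫ ≤
      L / δ * ∑ k ∈ Finset.Icc 1 τ, ‖Δ ((t : ℤ) - (k : ℤ))‖ ^ 2 + L * δ * (τ : ℝ) * ‖Δ (t : ℤ)‖ ^ 2 := by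
  set S := ∑ k ∈ Icc 1 τ, ‖Δ ((t : ℤ) - (k : ℤ))‖
  have hdelay : ∀ j, ‖x t - x (tj t j)‖ ≤ S := fun j =>
    norm_sub_delayed_le x Δ hΔ (htj t j).1 (htj t j).2
  have hpair : ∀ j u v, ‖u - v‖ ≤ S →
      ⟪gradient (Lf j) u - gradient (Lf j) v, Δ t⟫ ≤ L * S * ‖Δ t‖ := fun j u v huv =>
    (real_inner_le_norm _ _).trans <| by
      gcongr
      exact (hlip j u v).trans (by gcongr)
  have : Nonempty (Fin m) := ⟨⟨0, hm⟩⟩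
  have havg := inner_smul_sum_sub_smul_sum_le (fun i => gradient (Lf i) (x t))
    (fun i => gradient (Lf i) (x (tj t i))) (Δ t) fun j => hpair j _ _ (hdelay j)
  rw [Fintype.card_fin] at havg
  have hfirst := hpair ⟨0, hm⟩ _ _ ((norm_sub_rev _ _).le.trans (hdelay ⟨0, hm⟩))
  have hyoung := two_mul_sum_mul_le (Icc 1 τ) (fun k => ‖Δ ((t : ℤ) - (k : ℤ))‖) ‖Δ t‖ hδ
  rw [Nat.card_Icc, Nat.add_sub_cancel] at hyoung
  calc _ ≤ L * (2 * S * ‖Δ t‖) := by linarith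
    _ ≤ L * ((∑ k ∈ Icc 1 τ, ‖Δ ((t : ℤ) - (k : ℤ))‖ ^ 2) / δ + τ * δ * ‖Δ t‖ ^ 2) :=
      mul_le_mul_of_nonneg_left hyoung hL.le
    _ = _ := by ring

theorem stmt_2
    {p m τ : ℕ} (hp : 1 ≤ p) (hm : 0 < m)
    {L : ℝ}
    (hL : 0 < L)
    (Lf : Fin m → EuclideanSpace ℝ (Fin p) → ℝ)
    (hdiff : ∀ j, Differentiable ℝ (Lf j))
    (hlip : ∀ j (u v : EuclideanSpace ℝ (Fin p)), ‖gradient (Lf j) u - gradient (Lf j) v‖ ≤ L * ‖u - v‖)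
    (tj : ℕ → Fin m → ℕ)
    (htj : ∀ t j, t - τ ≤ tj t j ∧ tj t j ≤ t)
    (x : ℕ → EuclideanSpace ℝ (Fin p))
    (Δ : ℤ → EuclideanSpace ℝ (Fin p))
    (hΔ : ∀ s : ℤ, 0 ≤ s → Δ s = x (s.toNat + 1) - x s.toNat)
    (hΔneg : ∀ s : ℤ, s < 0 → Δ s = 0)
    (t : ℕ) (δ : ℝ) (hδ : 0 < δ)
    :
    ⟪((m : ℝ)⁻¹ • ∑ i, gradient (Lf i) (x t)) - (m : ℝ)⁻¹ • ∑ i, gradient (Lf i) (x (tj t i)),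
        Δ (t : ℤ)⟫ +
      ⟪gradient (Lf ⟨0, hm⟩) (x (tj t ⟨0, hm⟩)) - gradient (Lf ⟨0, hm⟩) (x t), Δ (t : ℤ)⟫ ≤
      L / δ * ∑ k ∈ Finset.Icc 1 τ, ‖Δ ((t : ℤ) - (k : ℤ))‖ ^ 2 + L * δ * (τ : ℝ) * ‖Δ (t : ℤ)‖ ^ 2 :=
  stmt_2_general hm hL Lf hlip tj htj x Δ hΔ t δ hδ
end

section
/- Suppose there exists δ > 0 with γ > 3L + 2Lδτ and ρ > 2Lτ/δ, and set c := min{γ/2 − 3L/2 − Lδτ, ρ/2 − Lτ/δ} > 0. Then for every T ≥ 1: F(x^{T+1}, x^T) − F(x^1, x^0) ≤ −c Σ_{t=0}^{T} ‖Δ^{(t)}‖². -/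
open scoped RealInnerProductSpace
open Filter

section aux
variable {E : Type*} [NormedAddCommGroup E] [InnerProductSpace ℝ E] [CompleteSpace E]

variable {E : Type*} [NormedAddCommGroup E] [InnerProductSpace ℝ E] [CompleteSpace E]

lemma inner_grad' (f : E → ℝ) (z v : E) : ⟪gradient f z, v⟫ = fderiv ℝ f z v :=
  InnerProductSpace.toDual_symm_apply

lemma lipschitz_descent_abs {L : ℝ} (hL : 0 ≤ L) {f : E → ℝ} (hf : Differentiable ℝ f)
    (hlip : ∀ u v, ‖gradient f u - gradient f v‖ ≤ L * ‖u - v‖) (x v : E) :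
    |f (x + v) - f x - ⟪gradient f x, v⟫| ≤ L / 2 * ‖v‖ ^ 2 := by
  have hpath : ∀ t : ℝ, HasDerivAt (fun t : ℝ => f (x + t • v)) ⟪gradient f (x + t • v), v⟫ t := by
    intro t
    have h1 : HasDerivAt (fun t : ℝ => x + t • v) v t := by
      simpa using ((hasDerivAt_id t).smul_const v).const_add x
    have h3 := ((hf (x + t • v)).hasFDerivAt).comp_hasDerivAt t h1
    rw [inner_grad']
    exact h3
  have hgc : Continuous fun z : E => gradient f z := by
    have : LipschitzWith (Real.toNNReal L) (fun z : E => gradient f z) := by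
      apply LipschitzWith.of_dist_le_mul
      intro a b
      rw [dist_eq_norm, dist_eq_norm, Real.coe_toNNReal L hL]
      exact hlip a b
    exact this.continuous
  have hcont : Continuous fun t : ℝ => ⟪gradient f (x + t • v), v⟫ :=
    (hgc.comp (by continuity)).inner continuous_const
  have hftc : (∫ t in (0:ℝ)..1, ⟪gradient f (x + t • v), v⟫) = f (x + v) - f x := by
    have := intervalIntegral.integral_eq_sub_of_hasDerivAt
      (f := fun t : ℝ => f (x + t • v)) (f' := fun t : ℝ => ⟪gradient f (x + t • v), v⟫)
      (a := 0) (b := 1) (fun t _ => hpath t) (hcont.intervalIntegrable 0 1)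
    simpa using this
  have hsplit : f (x + v) - f x - ⟪gradient f x, v⟫
      = ∫ t in (0:ℝ)..1, (⟪gradient f (x + t • v), v⟫ - ⟪gradient f x, v⟫) := by
    rw [intervalIntegral.integral_sub (hcont.intervalIntegrable 0 1)
      (intervalIntegrable_const), intervalIntegral.integral_const, hftc]
    simp
  rw [hsplit]
  have hbd : ∀ t ∈ Set.Ioc (0:ℝ) 1,
      ‖⟪gradient f (x + t • v), v⟫ - ⟪gradient f x, v⟫‖ ≤ L * t * ‖v‖ ^ 2 := by
    intro t ht
    have h1 : ⟪gradient f (x + t • v), v⟫ - ⟪gradient f x, v⟫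
        = ⟪gradient f (x + t • v) - gradient f x, v⟫ := by rw [inner_sub_left]
    rw [h1, Real.norm_eq_abs]
    calc |⟪gradient f (x + t • v) - gradient f x, v⟫|
        ≤ ‖gradient f (x + t • v) - gradient f x‖ * ‖v‖ := abs_real_inner_le_norm _ _
      _ ≤ (L * ‖(x + t • v) - x‖) * ‖v‖ :=
          mul_le_mul_of_nonneg_right (hlip _ _) (norm_nonneg _)
      _ = L * t * ‖v‖ ^ 2 := by
          rw [add_sub_cancel_left, norm_smul, Real.norm_eq_abs, abs_of_pos ht.1]; ring
  have habs : |∫ t in (0:ℝ)..1, (⟪gradient f (x + t • v), v⟫ - ⟪gradient f x, v⟫)|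
      ≤ |∫ t in (0:ℝ)..1, L * t * ‖v‖ ^ 2| := by
    rw [← Real.norm_eq_abs]
    apply intervalIntegral.norm_integral_le_abs_of_norm_le
    · filter_upwards [MeasureTheory.ae_restrict_mem measurableSet_Ioc] with t ht
      exact hbd t (by simpa [Set.uIoc_of_le (by norm_num : (0:ℝ) ≤ 1)] using ht)
    · apply Continuous.intervalIntegrable; continuity
  calc |∫ t in (0:ℝ)..1, (⟪gradient f (x + t • v), v⟫ - ⟪gradient f x, v⟫)|
      ≤ |∫ t in (0:ℝ)..1, L * t * ‖v‖ ^ 2| := habs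
    _ = L / 2 * ‖v‖ ^ 2 := by
        rw [abs_of_nonneg]
        swap
        · apply intervalIntegral.integral_nonneg (by norm_num)
          intro u hu
          have : 0 ≤ u := hu.1
          positivity
        have : (fun t : ℝ => L * t * ‖v‖ ^ 2) = fun t : ℝ => t * (L * ‖v‖ ^ 2) := by
          funext t; ring
        rw [this, intervalIntegral.integral_mul_const, integral_id]; ring

lemma descent_upper {L : ℝ} (hL : 0 ≤ L) {f : E → ℝ} (hf : Differentiable ℝ f)
    (hlip : ∀ u v, ‖gradient f u - gradient f v‖ ≤ L * ‖u - v‖) (z w : E) :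
    f w ≤ f z + ⟪gradient f z, w - z⟫ + L / 2 * ‖w - z‖ ^ 2 := by
  have := lipschitz_descent_abs hL hf hlip z (w - z)
  rw [add_sub_cancel] at this
  have := (abs_le.1 this).2
  linarith

lemma descent_lower {L : ℝ} (hL : 0 ≤ L) {f : E → ℝ} (hf : Differentiable ℝ f)
    (hlip : ∀ u v, ‖gradient f u - gradient f v‖ ≤ L * ‖u - v‖) (z w : E) :
    f z + ⟪gradient f z, w - z⟫ - L / 2 * ‖w - z‖ ^ 2 ≤ f w := by
  have := lipschitz_descent_abs hL hf hlip z (w - z)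
  rw [add_sub_cancel] at this
  have := (abs_le.1 this).1
  linarith

lemma approx_convex {L : ℝ} (hL : 0 ≤ L) {f : E → ℝ} (hf : Differentiable ℝ f)
    (hlip : ∀ u v, ‖gradient f u - gradient f v‖ ≤ L * ‖u - v‖) {θ : ℝ}
    (h0 : 0 ≤ θ) (h1 : θ ≤ 1) (u w : E) :
    f (θ • u + (1 - θ) • w) ≤ θ * f u + (1 - θ) * f w + L / 2 * (θ * (1 - θ)) * ‖u - w‖ ^ 2 := by
  set z := θ • u + (1 - θ) • w with hz
  have hu : u - z = (1 - θ) • (u - w) := by rw [hz]; module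
  have hw : w - z = -(θ • (u - w)) := by rw [hz]; module
  have l1 := descent_lower hL hf hlip z u
  have l2 := descent_lower hL hf hlip z w
  rw [hu] at l1
  rw [hw] at l2
  rw [real_inner_smul_right] at l1
  rw [inner_neg_right, real_inner_smul_right] at l2
  rw [norm_smul, Real.norm_eq_abs, abs_of_nonneg (by linarith : (0:ℝ) ≤ 1 - θ)] at l1
  rw [norm_neg, norm_smul, Real.norm_eq_abs, abs_of_nonneg h0] at l2
  have key := add_le_add (mul_le_mul_of_nonneg_left l1 h0)
    (mul_le_mul_of_nonneg_left l2 (by linarith : (0:ℝ) ≤ 1 - θ))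
  nlinarith [key, sq_nonneg (‖u - w‖), norm_nonneg (u - w)]

lemma telescope_norm (x : ℕ → E) : ∀ r q : ℕ, q ≤ r →
    ‖x r - x q‖ ≤ ∑ s ∈ Finset.Ico q r, ‖x (s + 1) - x s‖ := by
  intro r
  induction r with
  | zero => intro q hq; interval_cases q; simp
  | succ n ih =>
    intro q hq
    rcases Nat.lt_or_ge q (n + 1) with hlt | hge
    · have hq' : q ≤ n := Nat.lt_succ_iff.mp hlt
      have : x (n + 1) - x q = (x (n + 1) - x n) + (x n - x q) := by abel
      rw [this, Finset.sum_Ico_succ_top hq']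
      calc ‖(x (n + 1) - x n) + (x n - x q)‖ ≤ ‖x (n + 1) - x n‖ + ‖x n - x q‖ := norm_add_le _ _
        _ ≤ ‖x (n + 1) - x n‖ + ∑ s ∈ Finset.Ico q n, ‖x (s + 1) - x s‖ := by
            linarith [ih q hq']
        _ = (∑ s ∈ Finset.Ico q n, ‖x (s + 1) - x s‖) + ‖x (n + 1) - x n‖ := by ring
    · have : q = n + 1 := le_antisymm hq hge
      subst this; simp


lemma core_ineq {L ρ γ : ℝ} (hL : 0 < L) (hρ : 0 < ρ) {f : E → ℝ}
    (hf : Differentiable ℝ f)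
    (hlip : ∀ u v, ‖gradient f u - gradient f v‖ ≤ L * ‖u - v‖)
    (h : E → ℝ) (u : E)
    (hstrong : StrongConvexOn Set.univ γ (fun y => h y + ρ / 2 * ‖y - u‖ ^ 2))
    (g w : E)
    (hmin : ∀ y : E, f w + h w + ρ / 2 * ‖w - u‖ ^ 2 + ⟪g, w - u⟫ ≤
      f y + h y + ρ / 2 * ‖y - u‖ ^ 2 + ⟪g, y - u⟫) :
    f w + h w + ρ / 2 * ‖w - u‖ ^ 2 + ⟪g, w - u⟫ ≤
      f u + h u + (L - γ) / 2 * ‖w - u‖ ^ 2 := by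
  set C : ℝ := f w + h w + ρ / 2 * ‖w - u‖ ^ 2 + ⟪g, w - u⟫ with hC
  set K : ℝ := ‖w - u‖ ^ 2 with hK
  have hstep : ∀ θ : ℝ, 0 < θ → θ < 1 → C ≤ (f u + h u) + (1 - θ) * ((L - γ) / 2 * K) := by
    intro θ hθ0 hθ1
    set y : E := θ • u + (1 - θ) • w with hy
    have hyu : y - u = (1 - θ) • (w - u) := by rw [hy]; module
    have hinner : ⟪g, y - u⟫ = (1 - θ) * ⟪g, w - u⟫ := by
      rw [hyu, real_inner_smul_right]
    have hsc := hstrong.2 (Set.mem_univ u) (Set.mem_univ w) hθ0.le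
      (by linarith : (0:ℝ) ≤ 1 - θ) (by ring)
    simp only [smul_eq_mul] at hsc
    have hsc' : h y + ρ / 2 * ‖y - u‖ ^ 2 ≤
        θ * h u + (1 - θ) * (h w + ρ / 2 * ‖w - u‖ ^ 2) - θ * (1 - θ) * (γ / 2 * ‖w - u‖ ^ 2) := by
      have e1 : ‖u - w‖ = ‖w - u‖ := norm_sub_rev u w
      have e2 : h u + ρ / 2 * ‖u - u‖ ^ 2 = h u := by simp
      rw [e1, e2] at hsc
      exact hsc
    have hac := approx_convex hL.le hf hlip hθ0.le hθ1.le u w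
    rw [norm_sub_rev u w] at hac
    have hm := hmin y
    rw [hinner] at hm
    -- combine
    have comb : C ≤ θ * (f u + h u) + (1 - θ) * C + θ * (1 - θ) * ((L - γ) / 2 * K) := by
      rw [hC, hK]
      nlinarith [hm, hac, hsc']
    have : θ * C ≤ θ * ((f u + h u) + (1 - θ) * ((L - γ) / 2 * K)) := by nlinarith [comb]
    exact le_of_mul_le_mul_left this hθ0
  -- limit θ → 0
  have hseq : ∀ n : ℕ, C ≤ (f u + h u) + (1 - 1 / ((n : ℝ) + 2)) * ((L - γ) / 2 * K) := by
    intro n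
    have hp : (0:ℝ) < (n : ℝ) + 2 := by positivity
    refine hstep _ (by positivity) ?_
    rw [div_lt_one hp]
    linarith [Nat.cast_nonneg (α := ℝ) n]
  have htend : Tendsto (fun n : ℕ => (f u + h u) + (1 - 1 / ((n : ℝ) + 2)) * ((L - γ) / 2 * K))
      atTop (nhds ((f u + h u) + (1 - 0) * ((L - γ) / 2 * K))) := by
    have h2 : Tendsto (fun n : ℕ => ((n : ℝ) + 2)) atTop atTop :=
      tendsto_atTop_add_const_right atTop 2 tendsto_natCast_atTop_atTop
    have h3 : Tendsto (fun n : ℕ => 1 / ((n : ℝ) + 2)) atTop (nhds 0) := by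
      have h4 : Tendsto (fun n : ℕ => ((n : ℝ) + 2)⁻¹) atTop (nhds 0) := h2.inv_tendsto_atTop
      simpa [one_div] using h4
    exact (((tendsto_const_nhds.sub h3).mul_const _).const_add _)
  have := ge_of_tendsto htend (Filter.Eventually.of_forall hseq)
  linarith [this]

end aux



set_option maxHeartbeats 1000000 in
theorem stmt_4
    {p m τ : ℕ} (hp : 1 ≤ p) (hm : 0 < m)
    {L ρ γ : ℝ}
    (hL : 0 < L) (hρ : 0 < ρ) (hγ : 0 < γ)
    (Lf : Fin m → EuclideanSpace ℝ (Fin p) → ℝ)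
    (hdiff : ∀ j, Differentiable ℝ (Lf j))
    (hlip : ∀ j (u v : EuclideanSpace ℝ (Fin p)), ‖gradient (Lf j) u - gradient (Lf j) v‖ ≤ L * ‖u - v‖)
    (h : EuclideanSpace ℝ (Fin p) → ℝ)
    (hconv : ConvexOn ℝ Set.univ h)
    (hstrong : ∀ z : EuclideanSpace ℝ (Fin p), StrongConvexOn Set.univ γ (fun y => h y + ρ / 2 * ‖y - z‖ ^ 2))
    (tj : ℕ → Fin m → ℕ)
    (htj : ∀ t j, t - τ ≤ tj t j ∧ tj t j ≤ t)
    (x : ℕ → EuclideanSpace ℝ (Fin p))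
    (hupdate : ∀ t, ∀ y : EuclideanSpace ℝ (Fin p),
      Lf ⟨0, hm⟩ (x (t + 1)) + h (x (t + 1)) + ρ / 2 * ‖x (t + 1) - x t‖ ^ 2 +
          ⟪((m : ℝ)⁻¹ • ∑ j, gradient (Lf j) (x (tj t j))) - gradient (Lf ⟨0, hm⟩) (x (tj t ⟨0, hm⟩)), x (t + 1) - x t⟫ ≤
        Lf ⟨0, hm⟩ y + h y + ρ / 2 * ‖y - x t‖ ^ 2 +
          ⟪((m : ℝ)⁻¹ • ∑ j, gradient (Lf j) (x (tj t j))) - gradient (Lf ⟨0, hm⟩) (x (tj t ⟨0, hm⟩)), y - x t⟫)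
    (Δ : ℤ → EuclideanSpace ℝ (Fin p))
    (hΔ : ∀ s : ℤ, 0 ≤ s → Δ s = x (s.toNat + 1) - x s.toNat)
    (hΔneg : ∀ s : ℤ, s < 0 → Δ s = 0)
    (δ : ℝ) (hδ : 0 < δ)
    (hA1 : 3 * L + 2 * L * δ * τ < γ)
    (hA2 : 2 * L * τ / δ < ρ)
    (T : ℕ) (hT : 1 ≤ T)
    :
    (((m : ℝ)⁻¹ * ∑ j, Lf j (x (T + 1))) + ρ / 2 * ‖x (T + 1) - x T‖ ^ 2 + h (x (T + 1))) - (((m : ℝ)⁻¹ * ∑ j, Lf j (x 1)) + ρ / 2 * ‖x 1 - x 0‖ ^ 2 + h (x 1)) ≤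
      -(min (γ / 2 - 3 * L / 2 - L * δ * τ) (ρ / 2 - L * τ / δ)) *
        ∑ t ∈ Finset.range (T + 1), ‖Δ (t : ℤ)‖ ^ 2 := by
  have hmR : (0:ℝ) < (m:ℝ) := by exact_mod_cast hm
  set j0 : Fin m := ⟨0, hm⟩ with hj0
  set D : ℕ → ℝ := fun s => ‖x (s + 1) - x s‖ ^ 2 with hD
  have hD0 : ∀ s, 0 ≤ D s := fun s => by positivity
  set Fs : ℕ → ℝ := fun t =>
    (m : ℝ)⁻¹ * (∑ j, Lf j (x (t + 1))) + ρ / 2 * ‖x (t + 1) - x t‖ ^ 2 + h (x (t + 1)) with hFs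
  set a : ℝ := γ / 2 - 3 * L / 2 - L * δ * τ with ha
  set b : ℝ := ρ / 2 - L * τ / δ with hb
  have hapos : 0 < a := by rw [ha]; linarith
  have hbpos : 0 < b := by
    rw [hb]
    have h2 : 2 * (L * (τ:ℝ) / δ) = 2 * L * (τ:ℝ) / δ := by ring
    linarith
  -- step inequality
  have step : ∀ t : ℕ, Fs (t + 1) - Fs t ≤
      -a * D (t + 1) - ρ / 2 * D t + L / δ * ∑ s ∈ Finset.Ico (t + 1 - τ) (t + 1), D s := by
    intro t
    simp only [hFs, hD]
    set u : EuclideanSpace ℝ (Fin p) := x (t + 1) with hu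
    set w : EuclideanSpace ℝ (Fin p) := x (t + 1 + 1) with hw
    set g : EuclideanSpace ℝ (Fin p) :=
      ((m : ℝ)⁻¹ • ∑ j, gradient (Lf j) (x (tj (t + 1) j))) -
        gradient (Lf j0) (x (tj (t + 1) j0)) with hg
    set K : ℝ := ‖w - u‖ ^ 2 with hK
    have hKnn : (0:ℝ) ≤ K := by rw [hK]; positivity
    have hcore := core_ineq hL hρ (hdiff j0) (hlip j0) h u (hstrong u) g w
      (fun y => hupdate (t + 1) y)
    rw [← hK] at hcore
    have hup : ∀ j : Fin m, Lf j w ≤ Lf j u + ⟪gradient (Lf j) u, w - u⟫ + L / 2 * K :=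
      fun j => descent_upper hL.le (hdiff j) (hlip j) u w
    have hlow : Lf j0 u + ⟪gradient (Lf j0) u, w - u⟫ - L / 2 * K ≤ Lf j0 w :=
      descent_lower hL.le (hdiff j0) (hlip j0) u w
    -- averaged upper bound
    have havg : (m : ℝ)⁻¹ * (∑ j, Lf j w) ≤ (m : ℝ)⁻¹ * (∑ j, Lf j u)
        + ⟪(m : ℝ)⁻¹ • ∑ j, gradient (Lf j) u, w - u⟫ + L / 2 * K := by
      have hsum := Finset.sum_le_sum (fun j (_ : j ∈ Finset.univ) => hup j)
      rw [Finset.sum_add_distrib, Finset.sum_add_distrib, Finset.sum_const, Finset.card_univ,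
        Fintype.card_fin, nsmul_eq_mul] at hsum
      have hmul := mul_le_mul_of_nonneg_left hsum (by positivity : (0:ℝ) ≤ (m:ℝ)⁻¹)
      have hrhs : (m:ℝ)⁻¹ * ((∑ j, Lf j u) + (∑ j, ⟪gradient (Lf j) u, w - u⟫)
            + (m:ℝ) * (L / 2 * K))
          = (m:ℝ)⁻¹ * (∑ j, Lf j u) + (m:ℝ)⁻¹ * (∑ j, ⟪gradient (Lf j) u, w - u⟫)
            + L / 2 * K := by
        field_simp
      have hinner2 : ⟪(m:ℝ)⁻¹ • ∑ j, gradient (Lf j) u, w - u⟫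
          = (m:ℝ)⁻¹ * (∑ j, ⟪gradient (Lf j) u, w - u⟫) := by
        rw [real_inner_smul_left, sum_inner]
      linarith [hmul, hrhs.le, hrhs.ge]
    -- error bound
    set S : ℝ := ∑ s ∈ Finset.Ico (t + 1 - τ) (t + 1), ‖x (s + 1) - x s‖ with hS
    have hSnn : 0 ≤ S := Finset.sum_nonneg fun s _ => norm_nonneg _
    have hxq : ∀ q : ℕ, t + 1 - τ ≤ q → q ≤ t + 1 → ‖u - x q‖ ≤ S := by
      intro q h1 h2
      refine (telescope_norm x (t + 1) q h2).trans ?_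
      exact Finset.sum_le_sum_of_subset_of_nonneg (Finset.Ico_subset_Ico h1 le_rfl)
        (fun s _ _ => norm_nonneg _)
    have hdiffj : ∀ j : Fin m, ‖gradient (Lf j) u - gradient (Lf j) (x (tj (t + 1) j))‖
        ≤ L * S := by
      intro j
      refine (hlip j u _).trans ?_
      exact mul_le_mul_of_nonneg_left (hxq _ (htj (t + 1) j).1 (htj (t + 1) j).2) hL.le
    have henorm : ‖((m:ℝ)⁻¹ • ∑ j, gradient (Lf j) u) - gradient (Lf j0) u - g‖
        ≤ 2 * L * S := by
      have hrw : ((m:ℝ)⁻¹ • ∑ j, gradient (Lf j) u) - gradient (Lf j0) u - g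
          = (m:ℝ)⁻¹ • (∑ j, (gradient (Lf j) u - gradient (Lf j) (x (tj (t + 1) j))))
            - (gradient (Lf j0) u - gradient (Lf j0) (x (tj (t + 1) j0))) := by
        rw [hg, Finset.sum_sub_distrib, smul_sub]
        abel
      rw [hrw]
      refine (norm_sub_le _ _).trans ?_
      have h1 : ‖(m:ℝ)⁻¹ • (∑ j, (gradient (Lf j) u - gradient (Lf j) (x (tj (t + 1) j))))‖
          ≤ L * S := by
        rw [norm_smul, Real.norm_eq_abs, abs_of_nonneg (by positivity : (0:ℝ) ≤ (m:ℝ)⁻¹)]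
        have h2 : ‖∑ j, (gradient (Lf j) u - gradient (Lf j) (x (tj (t + 1) j)))‖
            ≤ (m:ℝ) * (L * S) := by
          refine (norm_sum_le _ _).trans ?_
          refine le_trans (Finset.sum_le_sum fun j _ => hdiffj j) ?_
          rw [Finset.sum_const, Finset.card_univ, Fintype.card_fin, nsmul_eq_mul]
        have h3 := mul_le_mul_of_nonneg_left h2 (by positivity : (0:ℝ) ≤ (m:ℝ)⁻¹)
        have h4 : (m:ℝ)⁻¹ * ((m:ℝ) * (L * S)) = L * S := by field_simp
        linarith
      have h5 := hdiffj j0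
      have h6 := norm_sub_rev (gradient (Lf j0) u) (gradient (Lf j0) (x (tj (t + 1) j0)))
      linarith
    have hie : ⟪((m:ℝ)⁻¹ • ∑ j, gradient (Lf j) u) - gradient (Lf j0) u - g, w - u⟫
        ≤ 2 * L * S * ‖w - u‖ := by
      refine (real_inner_le_norm _ _).trans ?_
      exact mul_le_mul_of_nonneg_right henorm (norm_nonneg _)
    have hsplit2 : 2 * L * S * ‖w - u‖
        = ∑ s ∈ Finset.Ico (t + 1 - τ) (t + 1), 2 * L * ‖x (s + 1) - x s‖ * ‖w - u‖ := by
      rw [hS, Finset.mul_sum, Finset.sum_mul]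
    have hkey : ∀ s : ℕ, 2 * L * ‖x (s + 1) - x s‖ * ‖w - u‖
        ≤ L * δ * K + L / δ * ‖x (s + 1) - x s‖ ^ 2 := by
      intro s
      rw [← sub_nonneg]
      have heq : L * δ * K + L / δ * ‖x (s + 1) - x s‖ ^ 2
            - 2 * L * ‖x (s + 1) - x s‖ * ‖w - u‖
          = L * (δ * ‖w - u‖ - ‖x (s + 1) - x s‖) ^ 2 / δ := by
        rw [hK]; field_simp; ring
      rw [heq]
      positivity
    have hcard : ((Finset.Ico (t + 1 - τ) (t + 1)).card : ℝ) ≤ (τ : ℝ) := by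
      have : (Finset.Ico (t + 1 - τ) (t + 1)).card ≤ τ := by rw [Nat.card_Ico]; omega
      exact_mod_cast this
    have hsum3 : ∑ s ∈ Finset.Ico (t + 1 - τ) (t + 1), 2 * L * ‖x (s + 1) - x s‖ * ‖w - u‖
        ≤ L * δ * (τ:ℝ) * K + L / δ * ∑ s ∈ Finset.Ico (t + 1 - τ) (t + 1),
            ‖x (s + 1) - x s‖ ^ 2 := by
      refine le_trans (Finset.sum_le_sum fun s _ => hkey s) ?_
      rw [Finset.sum_add_distrib, Finset.sum_const, nsmul_eq_mul, ← Finset.mul_sum]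
      have := mul_le_mul_of_nonneg_right hcard (by positivity : (0:ℝ) ≤ L * δ * K)
      nlinarith [this]
    have hie2 : ⟪((m:ℝ)⁻¹ • ∑ j, gradient (Lf j) u) - gradient (Lf j0) u - g, w - u⟫
        ≤ L * δ * (τ:ℝ) * K + L / δ * ∑ s ∈ Finset.Ico (t + 1 - τ) (t + 1),
            ‖x (s + 1) - x s‖ ^ 2 := by
      rw [hsplit2] at hie
      linarith
    have hexp : ⟪((m:ℝ)⁻¹ • ∑ j, gradient (Lf j) u) - gradient (Lf j0) u - g, w - u⟫
        = ⟪(m:ℝ)⁻¹ • ∑ j, gradient (Lf j) u, w - u⟫ - ⟪gradient (Lf j0) u, w - u⟫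
          - ⟪g, w - u⟫ := by
      rw [inner_sub_left, inner_sub_left]
    have haK : -a * K = (3 * L / 2 - γ / 2) * K + L * δ * (τ:ℝ) * K := by
      simp only [ha]; ring
    rw [hexp] at hie2
    linarith [hcore, havg, hlow, hie2, haK.le, haK.ge]
  -- telescoping
  have tele : ∑ t ∈ Finset.range T, (Fs (t + 1) - Fs t) = Fs T - Fs 0 := Finset.sum_range_sub Fs T
  have sum_step : Fs T - Fs 0 ≤ ∑ t ∈ Finset.range T,
      (-a * D (t + 1) - ρ / 2 * D t + L / δ * ∑ s ∈ Finset.Ico (t + 1 - τ) (t + 1), D s) := by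
    rw [← tele]; exact Finset.sum_le_sum fun t _ => step t
  -- double sum bound
  have dbl : ∑ t ∈ Finset.range T, ∑ s ∈ Finset.Ico (t + 1 - τ) (t + 1), D s ≤
      (τ : ℝ) * ∑ s ∈ Finset.range T, D s := by
    have h1 : ∀ t ∈ Finset.range T, ∑ s ∈ Finset.Ico (t + 1 - τ) (t + 1), D s
        = ∑ s ∈ Finset.range T, if s ∈ Finset.Ico (t + 1 - τ) (t + 1) then D s else 0 := by
      intro t ht
      rw [Finset.sum_ite_mem]
      congr 1
      symm
      rw [Finset.inter_eq_right]
      intro s hs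
      simp only [Finset.mem_Ico] at hs
      simp only [Finset.mem_range] at ht ⊢
      omega
    rw [Finset.sum_congr rfl h1, Finset.sum_comm]
    have h2 : ∀ s ∈ Finset.range T,
        (∑ t ∈ Finset.range T, if s ∈ Finset.Ico (t + 1 - τ) (t + 1) then D s else 0)
        ≤ (τ : ℝ) * D s := by
      intro s hs
      rw [← Finset.sum_filter]
      rw [Finset.sum_const, nsmul_eq_mul]
      apply mul_le_mul_of_nonneg_right _ (hD0 s)
      have hsub : (Finset.range T).filter (fun t => s ∈ Finset.Ico (t + 1 - τ) (t + 1))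
          ⊆ Finset.Ico s (s + τ) := by
        intro t ht
        simp only [Finset.mem_filter, Finset.mem_Ico, Finset.mem_range] at ht ⊢
        omega
      have hcard := Finset.card_le_card hsub
      rw [Nat.card_Ico, Nat.add_sub_cancel_left] at hcard
      exact_mod_cast hcard
    refine le_trans (Finset.sum_le_sum h2) ?_
    rw [Finset.mul_sum]
  -- combine
  set P : ℝ := ∑ t ∈ Finset.range T, D (t + 1) with hP
  set Q : ℝ := ∑ t ∈ Finset.range T, D t with hQ
  have hPnn : 0 ≤ P := Finset.sum_nonneg fun t _ => hD0 _
  have hQD0 : D 0 ≤ Q := Finset.single_le_sum (fun t _ => hD0 t)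
    (Finset.mem_range.mpr (by omega))
  have expand : ∑ t ∈ Finset.range T,
      (-a * D (t + 1) - ρ / 2 * D t + L / δ * ∑ s ∈ Finset.Ico (t + 1 - τ) (t + 1), D s)
      = -a * P - ρ / 2 * Q + L / δ * ∑ t ∈ Finset.range T, ∑ s ∈ Finset.Ico (t + 1 - τ) (t + 1), D s := by
    rw [Finset.sum_add_distrib, Finset.sum_sub_distrib, ← Finset.mul_sum, ← Finset.mul_sum,
      ← Finset.mul_sum]
  have hLδ : 0 ≤ L / δ := by positivity
  have final1 : Fs T - Fs 0 ≤ -a * P - b * Q := by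
    have h3 : L / δ * ∑ t ∈ Finset.range T, ∑ s ∈ Finset.Ico (t + 1 - τ) (t + 1), D s
        ≤ L / δ * ((τ:ℝ) * Q) := mul_le_mul_of_nonneg_left dbl hLδ
    have h4 : -a * P - ρ / 2 * Q + L / δ * ((τ:ℝ) * Q) = -a * P - b * Q := by
      rw [hb]; field_simp; ring
    calc Fs T - Fs 0 ≤ _ := sum_step
      _ = _ := expand
      _ ≤ -a * P - ρ / 2 * Q + L / δ * ((τ:ℝ) * Q) := by linarith
      _ = -a * P - b * Q := h4
  -- turn goal into Fs form
  set c : ℝ := min a b with hc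
  have hca : c ≤ a := min_le_left _ _
  have hcb : c ≤ b := min_le_right _ _
  have hΔeq : ∀ t : ℕ, ‖Δ (t : ℤ)‖ ^ 2 = D t := by
    intro t
    rw [hΔ (t : ℤ) (Int.natCast_nonneg t)]
    simp [hD]
  have hgoalsum : ∑ t ∈ Finset.range (T + 1), ‖Δ (t : ℤ)‖ ^ 2 = D 0 + P := by
    rw [Finset.sum_congr rfl fun t _ => hΔeq t, Finset.sum_range_succ']
    simp only [hP, hD]
    ring
  have : Fs T - Fs 0 ≤ -c * (D 0 + P) := by
    have e1 : -a * P ≤ -c * P := by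
      have := mul_le_mul_of_nonneg_right hca hPnn
      linarith
    have e2 : -b * Q ≤ -c * D 0 := by
      have h5 : c * D 0 ≤ b * D 0 := mul_le_mul_of_nonneg_right hcb (hD0 0)
      have h6 : b * D 0 ≤ b * Q := mul_le_mul_of_nonneg_left hQD0 hbpos.le
      linarith
    calc Fs T - Fs 0 ≤ -a * P - b * Q := final1
      _ ≤ -c * P + -c * D 0 := by linarith
      _ = -c * (D 0 + P) := by ring
  rw [hgoalsum]
  exact this
end

section
/- Under Assumption A, the potential function is uniformly bounded along the iterates: there exist constants F̲ and F̄ in ℝ such that −∞ < F̲ < F(x^{t+1}, x^t) < F̄ < +∞ for all t ≥ 0; in particular one may take F̲ = L̲ since F(x^{t+1}, x^t) ≥ 𝓛(x^{t+1}) > L̲. -/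
open scoped RealInnerProductSpace
open InnerProductSpace Topology Filter

section Aux
variable {E : Type*} [NormedAddCommGroup E] [InnerProductSpace ℝ E] [CompleteSpace E]

lemma line_hasDerivAt (f : E → ℝ) (hf : Differentiable ℝ f) (x v : E) (t : ℝ) :
    HasDerivAt (fun s : ℝ => f (x + s • v)) ⟪gradient f (x + t • v), v⟫ t := by
  have hc : HasDerivAt (fun s : ℝ => x + s • v) v t := by
    simpa using ((hasDerivAt_id t).smul_const v).const_add x
  have hg : HasFDerivAt f (toDual ℝ E (gradient f (x + t • v))) (x + t • v) :=
    (hf _).hasGradientAt.hasFDerivAt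
  have := hg.comp_hasDerivAt t hc
  simpa [toDual_apply_apply, Function.comp_def] using this

lemma descent_le (f : E → ℝ) (hf : Differentiable ℝ f) {L : ℝ} (hL0 : 0 ≤ L)
    (hlip : ∀ u v, ‖gradient f u - gradient f v‖ ≤ L * ‖u - v‖) (x y : E) :
    f y ≤ f x + ⟪gradient f x, y - x⟫ + L / 2 * ‖y - x‖ ^ 2 := by
  set v := y - x with hv
  set φ : ℝ → ℝ := fun t => f x + t * ⟪gradient f x, v⟫ + L / 2 * t ^ 2 * ‖v‖ ^ 2 - f (x + t • v)
    with hφ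
  have hd : ∀ t : ℝ, HasDerivAt φ
      (⟪gradient f x, v⟫ + L * t * ‖v‖ ^ 2 - ⟪gradient f (x + t • v), v⟫) t := by
    intro t
    have h1 : HasDerivAt (fun t : ℝ => f x + t * ⟪gradient f x, v⟫ + L / 2 * t ^ 2 * ‖v‖ ^ 2)
        (⟪gradient f x, v⟫ + L * t * ‖v‖ ^ 2) t := by
      have ha : HasDerivAt (fun t : ℝ => t * ⟪gradient f x, v⟫) ⟪gradient f x, v⟫ t := by
        simpa using (hasDerivAt_id t).mul_const ⟪gradient f x, v⟫
      have hb : HasDerivAt (fun t : ℝ => L / 2 * t ^ 2 * ‖v‖ ^ 2) (L * t * ‖v‖ ^ 2) t := by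
        have : HasDerivAt (fun t : ℝ => t ^ 2) (2 * t) t := by
          simpa using hasDerivAt_pow 2 t
        have := (this.const_mul (L / 2)).mul_const (‖v‖ ^ 2)
        exact this.congr_deriv (by ring)
      simpa [Pi.add_def] using ((ha.const_add (f x)).add hb)
    exact h1.sub (line_hasDerivAt f hf x v t)
  have hmono : MonotoneOn φ (Set.Icc (0:ℝ) 1) := by
    apply monotoneOn_of_deriv_nonneg (convex_Icc 0 1)
    · exact Continuous.continuousOn (by
        have : ∀ t, HasDerivAt φ _ t := hd
        exact (continuous_const.add (continuous_id.mul continuous_const)).add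
          ((continuous_const.mul (continuous_pow 2)).mul continuous_const) |>.sub
          (hf.continuous.comp (continuous_const.add (continuous_id.smul continuous_const))))
    · intro t ht
      exact (hd t).differentiableAt.differentiableWithinAt
    · intro t ht
      rw [(hd t).deriv]
      rw [interior_Icc] at ht
      have hnn : ⟪gradient f (x + t • v) - gradient f x, v⟫ ≤ L * t * ‖v‖ ^ 2 := by
        calc ⟪gradient f (x + t • v) - gradient f x, v⟫
            ≤ ‖gradient f (x + t • v) - gradient f x‖ * ‖v‖ := real_inner_le_norm _ _
          _ ≤ (L * ‖(x + t • v) - x‖) * ‖v‖ := by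
              have := hlip (x + t • v) x
              nlinarith [norm_nonneg v]
          _ = L * t * ‖v‖ ^ 2 := by
              rw [add_sub_cancel_left, norm_smul]
              rw [Real.norm_eq_abs, abs_of_pos ht.1]
              ring
      rw [inner_sub_left] at hnn
      linarith
  have h01 := hmono (Set.mem_Icc.2 ⟨le_refl 0, zero_le_one⟩) (Set.mem_Icc.2 ⟨zero_le_one, le_refl 1⟩) zero_le_one
  have hφ0 : φ 0 = 0 := by simp [hφ]
  have hφ1 : φ 1 = f x + ⟪gradient f x, v⟫ + L / 2 * ‖v‖ ^ 2 - f y := by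
    simp [hφ, hv]
  rw [hφ0, hφ1] at h01
  linarith

lemma descent_ge (f : E → ℝ) (hf : Differentiable ℝ f) {L : ℝ} (hL0 : 0 ≤ L)
    (hlip : ∀ u v, ‖gradient f u - gradient f v‖ ≤ L * ‖u - v‖) (x y : E) :
    f x + ⟪gradient f x, y - x⟫ - L / 2 * ‖y - x‖ ^ 2 ≤ f y := by
  have hneg : Differentiable ℝ (fun z => -f z) := hf.neg
  have hgradneg : ∀ z, gradient (fun z => -f z) z = -gradient f z := by
    intro z
    have h1 : HasGradientAt f (gradient f z) z := (hf z).hasGradientAt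
    have h2 : HasFDerivAt (fun z => -f z) (-(toDual ℝ E (gradient f z))) z := h1.hasFDerivAt.neg
    have h3 : HasGradientAt (fun z => -f z) (-(gradient f z)) z := by
      rw [hasGradientAt_iff_hasFDerivAt, map_neg]
      exact h2
    exact h3.gradient
  have hlipneg : ∀ u v, ‖gradient (fun z => -f z) u - gradient (fun z => -f z) v‖ ≤ L * ‖u - v‖ := by
    intro u v
    rw [hgradneg, hgradneg, show -gradient f u - -gradient f v = -(gradient f u - gradient f v) by abel, norm_neg]
    exact hlip u v
  have := descent_le (fun z => -f z) hneg hL0 hlipneg x y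
  rw [hgradneg] at this
  rw [inner_neg_left] at this
  linarith

lemma semiconvex_combo (f : E → ℝ) (hf : Differentiable ℝ f) {L : ℝ} (hL0 : 0 ≤ L)
    (hlip : ∀ u v, ‖gradient f u - gradient f v‖ ≤ L * ‖u - v‖)
    (u w : E) {a b : ℝ} (ha : 0 ≤ a) (hb : 0 ≤ b) (hab : a + b = 1) :
    f (a • u + b • w) ≤ a * f u + b * f w + L / 2 * (a * b) * ‖u - w‖ ^ 2 := by
  set z := a • u + b • w with hz
  have hu : f z + ⟪gradient f z, u - z⟫ - L / 2 * ‖u - z‖ ^ 2 ≤ f u := descent_ge f hf hL0 hlip z u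
  have hw : f z + ⟪gradient f z, w - z⟫ - L / 2 * ‖w - z‖ ^ 2 ≤ f w := descent_ge f hf hL0 hlip z w
  have huz : u - z = b • (u - w) := by
    rw [hz, smul_sub]
    have : u = (a + b) • u := by rw [hab, one_smul]
    calc u - (a • u + b • w) = (a + b) • u - (a • u + b • w) := by rw [← this]
      _ = b • u - b • w := by rw [add_smul]; abel
  have hwz : w - z = a • (w - u) := by
    rw [hz, smul_sub]
    have : w = (a + b) • w := by rw [hab, one_smul]
    calc w - (a • u + b • w) = (a + b) • w - (a • u + b • w) := by rw [← this]
      _ = a • w - a • u := by rw [add_smul]; abel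
  have hcomb : a * ⟪gradient f z, u - z⟫ + b * ⟪gradient f z, w - z⟫ = 0 := by
    rw [huz, hwz, real_inner_smul_right, real_inner_smul_right]
    have : ⟪gradient f z, w - u⟫ = -⟪gradient f z, u - w⟫ := by
      rw [← inner_neg_right, neg_sub]
    rw [this]; ring
  have hnu : ‖u - z‖ ^ 2 = b ^ 2 * ‖u - w‖ ^ 2 := by
    rw [huz, norm_smul, Real.norm_eq_abs, mul_pow, sq_abs]
  have hnw : ‖w - z‖ ^ 2 = a ^ 2 * ‖u - w‖ ^ 2 := by
    rw [hwz, norm_smul, Real.norm_eq_abs, mul_pow, sq_abs, norm_sub_rev]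
  have hsq : L / 2 * (a * ‖u - z‖ ^ 2) + L / 2 * (b * ‖w - z‖ ^ 2)
      = L / 2 * (a * b * ‖u - w‖ ^ 2) := by
    rw [hnu, hnw]
    have hb' : b = 1 - a := by linarith
    rw [hb']; ring
  have hfz : a * f z + b * f z = f z := by rw [← add_mul, hab, one_mul]
  have h1 := mul_le_mul_of_nonneg_left hu ha
  have h2 := mul_le_mul_of_nonneg_left hw hb
  nlinarith [h1, h2, hsq, hfz, hcomb]

lemma strong_min {G : E → ℝ} {μ : ℝ}
    (hsc : ∀ (u w : E) (a b : ℝ), 0 ≤ a → 0 ≤ b → a + b = 1 →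
      G (a • u + b • w) ≤ a * G u + b * G w - μ / 2 * (a * b) * ‖u - w‖ ^ 2)
    (xs : E) (hmin : ∀ y, G xs ≤ G y) (y : E) :
    G xs + μ / 2 * ‖xs - y‖ ^ 2 ≤ G y := by
  have key : ∀ a ∈ Set.Ico (0:ℝ) 1, G xs + μ / 2 * a * ‖xs - y‖ ^ 2 ≤ G y := by
    intro a ha
    obtain ⟨ha0, ha1⟩ := ha
    have hb0 : (0:ℝ) ≤ 1 - a := by linarith
    have hab : a + (1 - a) = 1 := by ring
    have h1 := hsc xs y a (1 - a) ha0 hb0 hab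
    have h2 := hmin (a • xs + (1 - a) • y)
    have hbpos : 0 < 1 - a := by linarith
    nlinarith
  have hne : (𝓝[<] (1:ℝ)).NeBot := inferInstance
  have htend : Filter.Tendsto (fun a : ℝ => G xs + μ / 2 * a * ‖xs - y‖ ^ 2) (𝓝[<] (1:ℝ))
      (𝓝 (G xs + μ / 2 * ‖xs - y‖ ^ 2)) := by
    have hc : Continuous (fun a : ℝ => G xs + μ / 2 * a * ‖xs - y‖ ^ 2) := by continuity
    have := hc.tendsto (1:ℝ)
    simp only [mul_one] at this
    exact this.mono_left nhdsWithin_le_nhds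
  refine le_of_tendsto htend ?_
  filter_upwards [Ioo_mem_nhdsLT_of_mem (Set.mem_Ioc.2 ⟨zero_lt_one, le_refl 1⟩)] with a ha
  exact key a ⟨ha.1.le, ha.2⟩

lemma tele_norm (x : ℕ → E) {k t : ℕ} (hk : k ≤ t) :
    ‖x t - x k‖ ≤ ∑ s ∈ Finset.Ico k t, ‖x (s + 1) - x s‖ := by
  have hsum : ∑ s ∈ Finset.Ico k t, (x (s + 1) - x s) = x t - x k := by
    induction t, hk using Nat.le_induction with
    | base => simp
    | succ n hn ih =>
        rw [Finset.sum_Ico_succ_top (by omega), ih]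
        abel
  calc ‖x t - x k‖ = ‖∑ s ∈ Finset.Ico k t, (x (s + 1) - x s)‖ := by rw [hsum]
    _ ≤ ∑ s ∈ Finset.Ico k t, ‖x (s + 1) - x s‖ := norm_sum_le _ _




set_option maxHeartbeats 1000000 in
theorem stmt_5
    {p m τ : ℕ} (hp : 1 ≤ p) (hm : 0 < m)
    {L ρ γ : ℝ}
    (hL : 0 < L) (hρ : 0 < ρ) (hγ : 0 < γ)
    (Lf : Fin m → EuclideanSpace ℝ (Fin p) → ℝ)
    (hdiff : ∀ j, Differentiable ℝ (Lf j))
    (hlip : ∀ j (u v : EuclideanSpace ℝ (Fin p)), ‖gradient (Lf j) u - gradient (Lf j) v‖ ≤ L * ‖u - v‖)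
    (h : EuclideanSpace ℝ (Fin p) → ℝ)
    (hconv : ConvexOn ℝ Set.univ h)
    (hstrong : ∀ z : EuclideanSpace ℝ (Fin p), StrongConvexOn Set.univ γ (fun y => h y + ρ / 2 * ‖y - z‖ ^ 2))
    (tj : ℕ → Fin m → ℕ)
    (htj : ∀ t j, t - τ ≤ tj t j ∧ tj t j ≤ t)
    (x : ℕ → EuclideanSpace ℝ (Fin p))
    (hupdate : ∀ t, ∀ y : EuclideanSpace ℝ (Fin p),
      Lf ⟨0, hm⟩ (x (t + 1)) + h (x (t + 1)) + ρ / 2 * ‖x (t + 1) - x t‖ ^ 2 +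
          ⟪((m : ℝ)⁻¹ • ∑ j, gradient (Lf j) (x (tj t j))) - gradient (Lf ⟨0, hm⟩) (x (tj t ⟨0, hm⟩)), x (t + 1) - x t⟫ ≤
        Lf ⟨0, hm⟩ y + h y + ρ / 2 * ‖y - x t‖ ^ 2 +
          ⟪((m : ℝ)⁻¹ • ∑ j, gradient (Lf j) (x (tj t j))) - gradient (Lf ⟨0, hm⟩) (x (tj t ⟨0, hm⟩)), y - x t⟫)
    (Δ : ℤ → EuclideanSpace ℝ (Fin p))
    (hΔ : ∀ s : ℤ, 0 ≤ s → Δ s = x (s.toNat + 1) - x s.toNat)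
    (hΔneg : ∀ s : ℤ, s < 0 → Δ s = 0)
    (δ : ℝ) (hδ : 0 < δ)
    (hA1 : 3 * L + 2 * L * δ * τ < γ)
    (hA2 : 2 * L * τ / δ < ρ)
    (Llo : ℝ) (hLlo : ∀ y : EuclideanSpace ℝ (Fin p), Llo < (((m : ℝ)⁻¹ * ∑ j, Lf j (y)) + h (y)))
    :
    (∃ Fbar : ℝ, ∀ t : ℕ, (((m : ℝ)⁻¹ * ∑ j, Lf j (x (t + 1))) + ρ / 2 * ‖x (t + 1) - x t‖ ^ 2 + h (x (t + 1))) < Fbar) ∧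
      (∀ t : ℕ, Llo < (((m : ℝ)⁻¹ * ∑ j, Lf j (x (t + 1))) + h (x (t + 1))) ∧
        (((m : ℝ)⁻¹ * ∑ j, Lf j (x (t + 1))) + h (x (t + 1))) ≤ (((m : ℝ)⁻¹ * ∑ j, Lf j (x (t + 1))) + ρ / 2 * ‖x (t + 1) - x t‖ ^ 2 + h (x (t + 1)))) := by
  have hm0 : ((m : ℝ)) ≠ 0 := Nat.cast_ne_zero.2 hm.ne'
  have hminv : (0:ℝ) ≤ (m:ℝ)⁻¹ := by positivity
  set gv : ℕ → EuclideanSpace ℝ (Fin p) := fun t =>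
    ((m : ℝ)⁻¹ • ∑ j, gradient (Lf j) (x (tj t j))) - gradient (Lf ⟨0, hm⟩) (x (tj t ⟨0, hm⟩))
    with hgv
  set nn : ℕ → ℝ := fun s => ‖x (s + 1) - x s‖ with hnn
  set Lc : EuclideanSpace ℝ (Fin p) → ℝ := fun y => ((m : ℝ)⁻¹ * ∑ j, Lf j y) + h y with hLc
  have hnn0 : ∀ s, 0 ≤ nn s := fun s => norm_nonneg _
  -- Piece A : strong minimizer inequality
  have pieceA : ∀ t : ℕ,
      Lf ⟨0, hm⟩ (x (t + 1)) + h (x (t + 1)) + ρ / 2 * nn t ^ 2 +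
        ⟪gv t, x (t + 1) - x t⟫ + (γ - L) / 2 * nn t ^ 2 ≤
      Lf ⟨0, hm⟩ (x t) + h (x t) := by
    intro t
    have hsc : ∀ (u w : EuclideanSpace ℝ (Fin p)) (a b : ℝ), 0 ≤ a → 0 ≤ b → a + b = 1 →
        (Lf ⟨0, hm⟩ (a • u + b • w) + h (a • u + b • w) + ρ / 2 * ‖(a • u + b • w) - x t‖ ^ 2 +
          ⟪gv t, (a • u + b • w) - x t⟫) ≤
        a * (Lf ⟨0, hm⟩ u + h u + ρ / 2 * ‖u - x t‖ ^ 2 + ⟪gv t, u - x t⟫) +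
        b * (Lf ⟨0, hm⟩ w + h w + ρ / 2 * ‖w - x t‖ ^ 2 + ⟪gv t, w - x t⟫) -
        (γ - L) / 2 * (a * b) * ‖u - w‖ ^ 2 := by
      intro u w a b ha hb hab
      have hψ := (hstrong (x t)).2 (Set.mem_univ u) (Set.mem_univ w) ha hb hab
      simp only [smul_eq_mul] at hψ
      have hf0 := semiconvex_combo (Lf ⟨0, hm⟩) (hdiff _) hL.le (hlip _) u w ha hb hab
      have hzx : (a • u + b • w) - x t = a • (u - x t) + b • (w - x t) := by
        have h1 : a • (u - x t) + b • (w - x t) = a • u + b • w - (a + b) • x t := by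
          rw [smul_sub, smul_sub, add_smul]; abel
        rw [h1, hab, one_smul]
      have hlin : ⟪gv t, (a • u + b • w) - x t⟫ =
          a * ⟪gv t, u - x t⟫ + b * ⟪gv t, w - x t⟫ := by
        rw [hzx, inner_add_right, real_inner_smul_right, real_inner_smul_right]
      linarith
    have hmin := strong_min
      (G := fun y => Lf ⟨0, hm⟩ y + h y + ρ / 2 * ‖y - x t‖ ^ 2 + ⟪gv t, y - x t⟫)
      (μ := γ - L) hsc (x (t + 1)) (fun y => hupdate t y) (x t)
    simp only [sub_self, norm_zero, inner_zero_right] at hmin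
    have hrev : ‖x (t + 1) - x t‖ = nn t := rfl
    rw [hrev, show (0:ℝ) ^ 2 = 0 by norm_num, mul_zero, add_zero, add_zero] at hmin
    linarith [hmin]
  -- Piece B : averaged descent lemma
  have pieceB : ∀ t : ℕ,
      (m : ℝ)⁻¹ * ∑ j, Lf j (x (t + 1)) ≤
        (m : ℝ)⁻¹ * ∑ j, Lf j (x t) +
        ⟪(m : ℝ)⁻¹ • ∑ j, gradient (Lf j) (x t), x (t + 1) - x t⟫ +
        L / 2 * nn t ^ 2 := by
    intro t
    have h1 : ∑ j, Lf j (x (t + 1)) ≤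
        ∑ j, (Lf j (x t) + ⟪gradient (Lf j) (x t), x (t + 1) - x t⟫ + L / 2 * nn t ^ 2) :=
      Finset.sum_le_sum fun j _ => descent_le (Lf j) (hdiff j) hL.le (hlip j) (x t) (x (t + 1))
    have h2 : ∑ j, (Lf j (x t) + ⟪gradient (Lf j) (x t), x (t + 1) - x t⟫ + L / 2 * nn t ^ 2)
        = ∑ j, Lf j (x t) + ⟪∑ j, gradient (Lf j) (x t), x (t + 1) - x t⟫
          + (m : ℝ) * (L / 2 * nn t ^ 2) := by
      rw [Finset.sum_add_distrib, Finset.sum_add_distrib, ← sum_inner, Finset.sum_const,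
        Finset.card_univ, Fintype.card_fin, nsmul_eq_mul]
    rw [h2] at h1
    have h3 := mul_le_mul_of_nonneg_left h1 hminv
    have h4 : (m : ℝ)⁻¹ * ((m : ℝ) * (L / 2 * nn t ^ 2)) = L / 2 * nn t ^ 2 := by
      rw [← mul_assoc, inv_mul_cancel₀ hm0, one_mul]
    rw [real_inner_smul_left]
    nlinarith [h3, h4]
  -- Piece B' : lower descent for Lf 0
  have pieceB' : ∀ t : ℕ,
      Lf ⟨0, hm⟩ (x t) + ⟪gradient (Lf ⟨0, hm⟩) (x t), x (t + 1) - x t⟫ - L / 2 * nn t ^ 2 ≤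
        Lf ⟨0, hm⟩ (x (t + 1)) :=
    fun t => descent_ge (Lf ⟨0, hm⟩) (hdiff _) hL.le (hlip _) (x t) (x (t + 1))
  -- error bound
  have pieceE : ∀ t : ℕ,
      ⟪(m : ℝ)⁻¹ • ∑ j, gradient (Lf j) (x t), x (t + 1) - x t⟫ -
      ⟪gradient (Lf ⟨0, hm⟩) (x t), x (t + 1) - x t⟫ - ⟪gv t, x (t + 1) - x t⟫ ≤
        L * δ * (τ : ℝ) * nn t ^ 2 + L / δ * ∑ s ∈ Finset.Ico (t - τ) t, nn s ^ 2 := by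
    intro t
    set S : ℝ := ∑ s ∈ Finset.Ico (t - τ) t, nn s with hS
    have hxk : ∀ j : Fin m, ‖x t - x (tj t j)‖ ≤ S := by
      intro j
      refine (tele_norm x (htj t j).2).trans ?_
      exact Finset.sum_le_sum_of_subset_of_nonneg
        (Finset.Ico_subset_Ico (htj t j).1 le_rfl) (fun s _ _ => norm_nonneg _)
    have hgj : ∀ j : Fin m, ‖gradient (Lf j) (x t) - gradient (Lf j) (x (tj t j))‖ ≤ L * S :=
      fun j => (hlip j _ _).trans (mul_le_mul_of_nonneg_left (hxk j) hL.le)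
    set ev : EuclideanSpace ℝ (Fin p) :=
      ((m : ℝ)⁻¹ • ∑ j, (gradient (Lf j) (x t) - gradient (Lf j) (x (tj t j)))) -
        (gradient (Lf ⟨0, hm⟩) (x t) - gradient (Lf ⟨0, hm⟩) (x (tj t ⟨0, hm⟩))) with hev
    have hid : ⟪(m : ℝ)⁻¹ • ∑ j, gradient (Lf j) (x t), x (t + 1) - x t⟫ -
        ⟪gradient (Lf ⟨0, hm⟩) (x t), x (t + 1) - x t⟫ - ⟪gv t, x (t + 1) - x t⟫ =
        ⟪ev, x (t + 1) - x t⟫ := by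
      have hvec : ev = ((m : ℝ)⁻¹ • ∑ j, gradient (Lf j) (x t)) -
          gradient (Lf ⟨0, hm⟩) (x t) - gv t := by
        rw [hev, hgv]
        simp only [Finset.sum_sub_distrib, smul_sub]
        abel
      rw [hvec]
      simp only [hgv, inner_sub_left]
    have hevn : ‖ev‖ ≤ 2 * L * S := by
      have h1 : ‖(m : ℝ)⁻¹ • ∑ j, (gradient (Lf j) (x t) - gradient (Lf j) (x (tj t j)))‖
          ≤ L * S := by
        rw [norm_smul, Real.norm_eq_abs, abs_of_nonneg hminv]
        have h2 : ‖∑ j, (gradient (Lf j) (x t) - gradient (Lf j) (x (tj t j)))‖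
            ≤ (m : ℝ) * (L * S) := by
          refine (norm_sum_le _ _).trans ?_
          calc ∑ j, ‖gradient (Lf j) (x t) - gradient (Lf j) (x (tj t j))‖
              ≤ ∑ _j : Fin m, L * S := Finset.sum_le_sum fun j _ => hgj j
            _ = (m : ℝ) * (L * S) := by
                rw [Finset.sum_const, Finset.card_univ, Fintype.card_fin, nsmul_eq_mul]
        calc (m : ℝ)⁻¹ * ‖∑ j, (gradient (Lf j) (x t) - gradient (Lf j) (x (tj t j)))‖
            ≤ (m : ℝ)⁻¹ * ((m : ℝ) * (L * S)) := by
              exact mul_le_mul_of_nonneg_left h2 hminv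
          _ = L * S := by rw [← mul_assoc, inv_mul_cancel₀ hm0, one_mul]
      have h3 : ‖gradient (Lf ⟨0, hm⟩) (x t) - gradient (Lf ⟨0, hm⟩) (x (tj t ⟨0, hm⟩))‖
          ≤ L * S := hgj _
      calc ‖ev‖ ≤ _ + _ := norm_sub_le _ _
        _ ≤ L * S + L * S := add_le_add h1 h3
        _ = 2 * L * S := by ring
    have hip : ⟪ev, x (t + 1) - x t⟫ ≤ 2 * L * S * nn t :=
      (real_inner_le_norm _ _).trans (mul_le_mul_of_nonneg_right hevn (norm_nonneg _))
    have hSb : 2 * L * S * nn t ≤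
        L * δ * (τ : ℝ) * nn t ^ 2 + L / δ * ∑ s ∈ Finset.Ico (t - τ) t, nn s ^ 2 := by
      have hper : ∀ s ∈ Finset.Ico (t - τ) t,
          2 * L * nn s * nn t ≤ L * δ * nn t ^ 2 + L / δ * nn s ^ 2 := by
        intro s _
        have h5 : (0:ℝ) ≤ L / δ * (δ * nn t - nn s) ^ 2 :=
          mul_nonneg (div_nonneg hL.le hδ.le) (sq_nonneg _)
        have hexp : L / δ * (δ * nn t - nn s) ^ 2 =
            L * δ * nn t ^ 2 - 2 * L * nn s * nn t + L / δ * nn s ^ 2 := by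
          field_simp
          ring
        rw [hexp] at h5
        linarith
      have hsum := Finset.sum_le_sum hper
      have hL1 : 2 * L * S * nn t = ∑ s ∈ Finset.Ico (t - τ) t, 2 * L * nn s * nn t := by
        rw [hS, Finset.mul_sum, Finset.sum_mul]
      have hR : ∑ s ∈ Finset.Ico (t - τ) t, (L * δ * nn t ^ 2 + L / δ * nn s ^ 2) =
          ((t - (t - τ) : ℕ) : ℝ) * (L * δ * nn t ^ 2) +
          L / δ * ∑ s ∈ Finset.Ico (t - τ) t, nn s ^ 2 := by
        rw [Finset.sum_add_distrib, Finset.sum_const, Nat.card_Ico, nsmul_eq_mul,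
          Finset.mul_sum]
      have hcard : ((t - (t - τ) : ℕ) : ℝ) ≤ (τ : ℝ) := by
        have hc2 : t - (t - τ) ≤ τ := by omega
        exact_mod_cast hc2
      have hnnt2 : (0:ℝ) ≤ L * δ * nn t ^ 2 := by positivity
      rw [← hL1, hR] at hsum
      have hc3 := mul_le_mul_of_nonneg_right hcard hnnt2
      linarith
    rw [hid]
    linarith
  -- key single-step inequality
  have key : ∀ t : ℕ,
      Lc (x (t + 1)) + (ρ / 2 + (γ - L) / 2 - L - L * δ * (τ : ℝ)) * nn t ^ 2 ≤
        Lc (x t) + L / δ * ∑ s ∈ Finset.Ico (t - τ) t, nn s ^ 2 := by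
    intro t
    have hA := pieceA t
    have hB := pieceB t
    have hB' := pieceB' t
    have hE := pieceE t
    simp only [hLc]
    linarith
  -- constants
  have hLδ : (0:ℝ) ≤ L / δ := div_nonneg hL.le hδ.le
  have hgamL : (0:ℝ) ≤ (γ - L) / 2 - L - L * δ * (τ : ℝ) := by linarith
  have hc1 : L / δ * (τ : ℝ) ≤ ρ / 2 + (γ - L) / 2 - L - L * δ * (τ : ℝ) := by
    have h1 : L * (τ : ℝ) / δ < ρ / 2 := by
      have hr : 2 * L * (τ : ℝ) / δ = 2 * (L * (τ : ℝ) / δ) := by ring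
      linarith [hA2, hr]
    have h1' : L / δ * (τ : ℝ) = L * (τ : ℝ) / δ := by ring
    linarith
  have hc2 : ρ / 2 ≤ ρ / 2 + (γ - L) / 2 - L - L * δ * (τ : ℝ) := by linarith
  -- Lyapunov function
  set W : ℕ → ℝ := fun t => ∑ s ∈ Finset.Ico (t - τ) t, ((s : ℝ) + (τ : ℝ) + 1 - (t : ℝ)) * nn s ^ 2
    with hW
  set Phi : ℕ → ℝ := fun t => Lc (x t) + L / δ * W t with hPhi
  have hWsum : ∀ t : ℕ, ∑ s ∈ Finset.Ico (t - τ) t, nn s ^ 2 ≤ W t := by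
    intro t
    refine Finset.sum_le_sum fun s hs => ?_
    have h2 : t ≤ s + τ := by
      have := (Finset.mem_Ico.1 hs).1
      omega
    have h3 : (t : ℝ) ≤ (s : ℝ) + (τ : ℝ) := by exact_mod_cast h2
    have h4 : (1:ℝ) ≤ (s : ℝ) + (τ : ℝ) + 1 - (t : ℝ) := by linarith
    have := mul_le_mul_of_nonneg_right h4 (sq_nonneg (nn s))
    linarith
  have hdec : ∀ t : ℕ, Phi (t + 1) ≤ Phi t := by
    intro t
    have hW1 : W (t + 1) ≤ (τ : ℝ) * nn t ^ 2 +
        ∑ s ∈ Finset.Ico (t - τ) t, ((s : ℝ) + (τ : ℝ) - (t : ℝ)) * nn s ^ 2 := by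
      by_cases hτ : τ = 0
      · subst hτ
        have hWz : W (t + 1) = 0 := by
          show (∑ s ∈ Finset.Ico (t + 1 - 0) (t + 1), _) = (0:ℝ)
          simp
        have hRz : ∑ s ∈ Finset.Ico (t - 0) t, ((s : ℝ) + ((0:ℕ) : ℝ) - (t : ℝ)) * nn s ^ 2
            = ∑ s ∈ Finset.Ico t t, ((s : ℝ) + ((0:ℕ) : ℝ) - (t : ℝ)) * nn s ^ 2 := by
          norm_num
        rw [hWz, hRz]
        simp
      · have h1 : t + 1 - τ ≤ t := by omega
        have hsplit : W (t + 1) =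
            (∑ s ∈ Finset.Ico (t + 1 - τ) t, ((s : ℝ) + (τ : ℝ) + 1 - ((t + 1 : ℕ) : ℝ)) * nn s ^ 2)
            + ((t : ℝ) + (τ : ℝ) + 1 - ((t + 1 : ℕ) : ℝ)) * nn t ^ 2 :=
          Finset.sum_Ico_succ_top h1 _
        have htop : ((t : ℝ) + (τ : ℝ) + 1 - ((t + 1 : ℕ) : ℝ)) * nn t ^ 2 = (τ : ℝ) * nn t ^ 2 := by
          push_cast
          ring
        have heq : (∑ s ∈ Finset.Ico (t + 1 - τ) t, ((s : ℝ) + (τ : ℝ) + 1 - ((t + 1 : ℕ) : ℝ)) * nn s ^ 2)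
            = ∑ s ∈ Finset.Ico (t + 1 - τ) t, ((s : ℝ) + (τ : ℝ) - (t : ℝ)) * nn s ^ 2 :=
          Finset.sum_congr rfl fun s _ => by push_cast; ring
        have hmono : ∑ s ∈ Finset.Ico (t + 1 - τ) t, ((s : ℝ) + (τ : ℝ) - (t : ℝ)) * nn s ^ 2 ≤
            ∑ s ∈ Finset.Ico (t - τ) t, ((s : ℝ) + (τ : ℝ) - (t : ℝ)) * nn s ^ 2 := by
          refine Finset.sum_le_sum_of_subset_of_nonneg
            (Finset.Ico_subset_Ico (by omega) le_rfl) fun s hs _ => ?_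
          have h2 : t ≤ s + τ := by
            have := (Finset.mem_Ico.1 hs).1
            omega
          have h3 : (t : ℝ) ≤ (s : ℝ) + (τ : ℝ) := by exact_mod_cast h2
          exact mul_nonneg (by linarith) (sq_nonneg _)
        rw [hsplit, htop, heq]
        linarith
    have hkey := key t
    have hW1' := mul_le_mul_of_nonneg_left hW1 hLδ
    have hcomb : L / δ * ∑ s ∈ Finset.Ico (t - τ) t, nn s ^ 2 +
        L / δ * ∑ s ∈ Finset.Ico (t - τ) t, ((s : ℝ) + (τ : ℝ) - (t : ℝ)) * nn s ^ 2
        = L / δ * W t := by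
      rw [← mul_add, ← Finset.sum_add_distrib]
      congr 1
      exact Finset.sum_congr rfl fun s _ => by ring
    have hterm : L / δ * ((τ : ℝ) * nn t ^ 2) ≤
        (ρ / 2 + (γ - L) / 2 - L - L * δ * (τ : ℝ)) * nn t ^ 2 := by
      have := mul_le_mul_of_nonneg_right hc1 (sq_nonneg (nn t))
      linarith
    show Lc (x (t + 1)) + L / δ * W (t + 1) ≤ Lc (x t) + L / δ * W t
    linarith
  have hPhi0 : Phi 0 = Lc (x 0) := by
    have hWz : W 0 = 0 := by
      show (∑ s ∈ Finset.Ico (0 - τ) 0, _) = (0:ℝ)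
      simp
    show Lc (x 0) + L / δ * W 0 = Lc (x 0)
    rw [hWz, mul_zero, add_zero]
  have hPhile : ∀ t : ℕ, Phi t ≤ Lc (x 0) := by
    intro t
    induction t with
    | zero => exact hPhi0.le
    | succ n ih => exact (hdec n).trans ih
  clear_value gv nn Lc W Phi
  constructor
  · refine ⟨Lc (x 0) + 1, fun t => ?_⟩
    have hkey := key t
    have h1 : ρ / 2 * nn t ^ 2 ≤ (ρ / 2 + (γ - L) / 2 - L - L * δ * (τ : ℝ)) * nn t ^ 2 := by
      have := mul_le_mul_of_nonneg_right hc2 (sq_nonneg (nn t))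
      linarith
    have h2 : L / δ * ∑ s ∈ Finset.Ico (t - τ) t, nn s ^ 2 ≤ L / δ * W t :=
      mul_le_mul_of_nonneg_left (hWsum t) hLδ
    have h3 := hPhile t
    have h4 : Phi t = Lc (x t) + L / δ * W t := by rw [hPhi]
    have hgoal : Lc (x (t + 1)) + ρ / 2 * nn t ^ 2 ≤ Lc (x 0) := by linarith
    have h5 : ((m : ℝ)⁻¹ * ∑ j, Lf j (x (t + 1))) + ρ / 2 * ‖x (t + 1) - x t‖ ^ 2 + h (x (t + 1))
        = Lc (x (t + 1)) + ρ / 2 * nn t ^ 2 := by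
      simp only [hLc, hnn]
      ring
    linarith
  · intro t
    refine ⟨hLlo _, ?_⟩
    have hpos : (0:ℝ) ≤ ρ / 2 * ‖x (t + 1) - x t‖ ^ 2 := by positivity
    linarith
end Aux
end

section
/- (Theorem 1, boundedness of sequence, part (ii).) Under Assumption A, if in addition 𝓛 is coercive (𝓛(x) → +∞ as ‖x‖ → +∞), then the sequence of iterates {x^t}_{t∈ℕ} is bounded. -/
set_option maxHeartbeats 1000000

open scoped RealInnerProductSpace

lemma taylor_bound {p : ℕ} {K : ℝ} (hK : 0 ≤ K) {f : EuclideanSpace ℝ (Fin p) → ℝ}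
    (hdiff : Differentiable ℝ f)
    (hlip : ∀ u v, ‖gradient f u - gradient f v‖ ≤ K * ‖u - v‖)
    (a b : EuclideanSpace ℝ (Fin p)) :
    |f b - f a - ⟪gradient f a, b - a⟫| ≤ K / 2 * ‖b - a‖ ^ 2 := by
  set v := b - a with hv
  have hc : ∀ t : ℝ, HasDerivAt (fun s : ℝ => a + s • v) v t := by
    intro t
    simpa using ((hasDerivAt_id t).smul_const v).const_add a
  have hgcont : Continuous (gradient f) := by
    have : LipschitzWith (Real.toNNReal K) (gradient f) := by
      apply LipschitzWith.of_dist_le_mul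
      intro u w
      rw [dist_eq_norm, dist_eq_norm]
      simpa [Real.coe_toNNReal K hK] using hlip u w
    exact this.continuous
  have hcont : Continuous (fun t : ℝ => ⟪gradient f (a + t • v), v⟫) := by
    apply Continuous.inner
    · exact hgcont.comp (by continuity)
    · exact continuous_const
  have hd : ∀ t : ℝ, HasDerivAt (fun s : ℝ => f (a + s • v)) ⟪gradient f (a + t • v), v⟫ t := by
    intro t
    have h1 := ((hdiff (a + t • v)).hasGradientAt).hasFDerivAt
    have h2 := h1.comp_hasDerivAt t (hc t)
    simpa [InnerProductSpace.toDual_apply_apply, Function.comp_def] using h2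
  have hint : IntervalIntegrable (fun t : ℝ => ⟪gradient f (a + t • v), v⟫)
      MeasureTheory.volume 0 1 := hcont.intervalIntegrable 0 1
  have key : ∫ t in (0:ℝ)..1, ⟪gradient f (a + t • v), v⟫ = f b - f a := by
    have := intervalIntegral.integral_eq_sub_of_hasDerivAt (f := fun s : ℝ => f (a + s • v))
      (fun t _ => hd t) hint
    simpa [hv] using this
  have expand : f b - f a - ⟪gradient f a, v⟫
      = ∫ t in (0:ℝ)..1, (⟪gradient f (a + t • v), v⟫ - ⟪gradient f a, v⟫) := by
    rw [intervalIntegral.integral_sub hint (continuous_const.intervalIntegrable 0 1)]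
    rw [key]
    simp
  rw [expand]
  have habs : ∀ t ∈ Set.Icc (0:ℝ) 1,
      |⟪gradient f (a + t • v), v⟫ - ⟪gradient f a, v⟫| ≤ K * ‖v‖ ^ 2 * t := by
    intro t ht
    have h1 : ⟪gradient f (a + t • v), v⟫ - ⟪gradient f a, v⟫
        = ⟪gradient f (a + t • v) - gradient f a, v⟫ := by rw [inner_sub_left]
    rw [h1]
    calc |⟪gradient f (a + t • v) - gradient f a, v⟫|
        ≤ ‖gradient f (a + t • v) - gradient f a‖ * ‖v‖ := abs_real_inner_le_norm _ _
      _ ≤ (K * ‖a + t • v - a‖) * ‖v‖ := by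
          apply mul_le_mul_of_nonneg_right (hlip _ _) (norm_nonneg _)
      _ = K * ‖v‖ ^ 2 * t := by
          have : a + t • v - a = t • v := by abel
          rw [this, norm_smul, Real.norm_eq_abs, abs_of_nonneg ht.1]
          ring
  calc |∫ t in (0:ℝ)..1, (⟪gradient f (a + t • v), v⟫ - ⟪gradient f a, v⟫)|
      ≤ ∫ t in (0:ℝ)..1, |⟪gradient f (a + t • v), v⟫ - ⟪gradient f a, v⟫| :=
        intervalIntegral.abs_integral_le_integral_abs (by norm_num)
    _ ≤ ∫ t in (0:ℝ)..1, K * ‖v‖ ^ 2 * t := by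
        apply intervalIntegral.integral_mono_on (by norm_num) _ ((continuous_const.mul continuous_id).intervalIntegrable 0 1)
        · intro t ht; exact habs t ht
        · exact (hcont.sub continuous_const).abs.intervalIntegrable 0 1
    _ = K / 2 * ‖v‖ ^ 2 := by
        rw [intervalIntegral.integral_const_mul, integral_id]
        ring

lemma weak_cvx {p : ℕ} {K : ℝ} (hK : 0 ≤ K) {f : EuclideanSpace ℝ (Fin p) → ℝ}
    (hdiff : Differentiable ℝ f)
    (hlip : ∀ u v, ‖gradient f u - gradient f v‖ ≤ K * ‖u - v‖)
    (a b : EuclideanSpace ℝ (Fin p)) {s t : ℝ} (hs : 0 ≤ s) (ht : 0 ≤ t) (hst : s + t = 1) :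
    f (s • a + t • b) ≤ s * f a + t * f b + K / 2 * (s * t) * ‖a - b‖ ^ 2 := by
  set z := s • a + t • b with hz
  have haz : a - z = t • (a - b) := by
    rw [hz, smul_sub]
    have hs' : s = 1 - t := by linarith
    rw [hs']
    module
  have hbz : b - z = s • (b - a) := by
    rw [hz, smul_sub]
    have ht' : t = 1 - s := by linarith
    rw [ht']
    module
  have h1 := (abs_le.1 (taylor_bound hK hdiff hlip z a)).1
  have h2 := (abs_le.1 (taylor_bound hK hdiff hlip z b)).1
  -- h1 : -(K/2 * ‖a - z‖^2) ≤ f a - f z - ⟪gradient f z, a - z⟫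
  have hna : ‖a - z‖ ^ 2 = t ^ 2 * ‖a - b‖ ^ 2 := by
    rw [haz, norm_smul, Real.norm_eq_abs, abs_of_nonneg ht, mul_pow]
  have hnb : ‖b - z‖ ^ 2 = s ^ 2 * ‖a - b‖ ^ 2 := by
    rw [hbz, norm_smul, Real.norm_eq_abs, abs_of_nonneg hs, mul_pow, norm_sub_rev]
  have hinner : s * ⟪gradient f z, a - z⟫ + t * ⟪gradient f z, b - z⟫ = 0 := by
    rw [haz, hbz, real_inner_smul_right, real_inner_smul_right]
    have : (b : EuclideanSpace ℝ (Fin p)) - a = -(a - b) := by abel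
    rw [this, inner_neg_right]
    ring
  rw [hna] at h1
  rw [hnb] at h2
  have h1' := mul_le_mul_of_nonneg_left h1 hs
  have h2' := mul_le_mul_of_nonneg_left h2 ht
  have hstt : s * (K / 2 * (t ^ 2 * ‖a - b‖ ^ 2)) + t * (K / 2 * (s ^ 2 * ‖a - b‖ ^ 2))
      = K / 2 * (s * t) * ‖a - b‖ ^ 2 := by
    linear_combination (K / 2 * s * t * ‖a - b‖ ^ 2) * hst
  have hfz : s * f z + t * f z = f z := by linear_combination f z * hst
  have e1 : s * (f a - f z - ⟪gradient f z, a - z⟫)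
      = s * f a - s * f z - s * ⟪gradient f z, a - z⟫ := by ring
  have e2 : t * (f b - f z - ⟪gradient f z, b - z⟫)
      = t * f b - t * f z - t * ⟪gradient f z, b - z⟫ := by ring
  rw [e1] at h1'
  rw [e2] at h2'
  nlinarith [h1', h2']

/-- minimizer of a function satisfying a strong-convexity-type inequality has quadratic gap -/
lemma strong_min_gap {p : ℕ} {μ : ℝ} (hμ : 0 ≤ μ) {G : EuclideanSpace ℝ (Fin p) → ℝ}
    {u v : EuclideanSpace ℝ (Fin p)}
    (hmin : ∀ y, G u ≤ G y)
    (hconv : ∀ s r : ℝ, 0 ≤ s → 0 ≤ r → s + r = 1 →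
      G (s • u + r • v) ≤ s * G u + r * G v - s * r * (μ / 2) * ‖u - v‖ ^ 2) :
    G u + μ / 2 * ‖u - v‖ ^ 2 ≤ G v := by
  refine le_of_forall_pos_le_add ?_
  intro ε hε
  have hc0 : (0:ℝ) ≤ μ / 2 * ‖u - v‖ ^ 2 := by positivity
  set c0 := μ / 2 * ‖u - v‖ ^ 2 with hc0def
  set θ := min 1 (ε / (c0 + 1)) with hθdef
  have hθpos : 0 < θ := lt_min one_pos (div_pos hε (by linarith))
  have hθle : θ ≤ 1 := min_le_left _ _
  have h1 := hconv (1 - θ) θ (by linarith) hθpos.le (by ring)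
  have h5 : G u ≤ (1 - θ) * G u + θ * G v - (1 - θ) * θ * (μ / 2) * ‖u - v‖ ^ 2 :=
    le_trans (hmin _) h1
  have h6 : θ * (G u + (1 - θ) * c0) ≤ θ * G v := by rw [hc0def]; nlinarith [h5]
  have h7 : G u + (1 - θ) * c0 ≤ G v := (mul_le_mul_iff_right₀ hθpos).1 h6
  have hθc : θ * c0 ≤ ε := by
    have h8 : θ ≤ ε / (c0 + 1) := min_le_right _ _
    calc θ * c0 ≤ ε / (c0 + 1) * c0 := mul_le_mul_of_nonneg_right h8 hc0
      _ ≤ ε := by rw [div_mul_eq_mul_div, div_le_iff₀ (by linarith)]; nlinarith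
  linarith

theorem stmt_7
    {p m τ : ℕ} (hp : 1 ≤ p) (hm : 0 < m)
    {L ρ γ : ℝ}
    (hL : 0 < L) (hρ : 0 < ρ) (hγ : 0 < γ)
    (Lf : Fin m → EuclideanSpace ℝ (Fin p) → ℝ)
    (hdiff : ∀ j, Differentiable ℝ (Lf j))
    (hlip : ∀ j (u v : EuclideanSpace ℝ (Fin p)), ‖gradient (Lf j) u - gradient (Lf j) v‖ ≤ L * ‖u - v‖)
    (h : EuclideanSpace ℝ (Fin p) → ℝ)
    (hconv : ConvexOn ℝ Set.univ h)
    (hstrong : ∀ z : EuclideanSpace ℝ (Fin p), StrongConvexOn Set.univ γ (fun y => h y + ρ / 2 * ‖y - z‖ ^ 2))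
    (tj : ℕ → Fin m → ℕ)
    (htj : ∀ t j, t - τ ≤ tj t j ∧ tj t j ≤ t)
    (x : ℕ → EuclideanSpace ℝ (Fin p))
    (hupdate : ∀ t, ∀ y : EuclideanSpace ℝ (Fin p),
      Lf ⟨0, hm⟩ (x (t + 1)) + h (x (t + 1)) + ρ / 2 * ‖x (t + 1) - x t‖ ^ 2 +
          ⟪((m : ℝ)⁻¹ • ∑ j, gradient (Lf j) (x (tj t j))) - gradient (Lf ⟨0, hm⟩) (x (tj t ⟨0, hm⟩)), x (t + 1) - x t⟫ ≤
        Lf ⟨0, hm⟩ y + h y + ρ / 2 * ‖y - x t‖ ^ 2 +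
          ⟪((m : ℝ)⁻¹ • ∑ j, gradient (Lf j) (x (tj t j))) - gradient (Lf ⟨0, hm⟩) (x (tj t ⟨0, hm⟩)), y - x t⟫)
    (δ : ℝ) (hδ : 0 < δ)
    (hA1 : 3 * L + 2 * L * δ * τ < γ)
    (hA2 : 2 * L * τ / δ < ρ)
    (Llo : ℝ) (hLlo : ∀ y : EuclideanSpace ℝ (Fin p), Llo < (((m : ℝ)⁻¹ * ∑ j, Lf j (y)) + h (y)))
    (hcoer : Filter.Tendsto (fun y : EuclideanSpace ℝ (Fin p) => (((m : ℝ)⁻¹ * ∑ j, Lf j (y)) + h (y)))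
      (Filter.comap (fun y : EuclideanSpace ℝ (Fin p) => ‖y‖) Filter.atTop) Filter.atTop)
    :
    ∃ R : ℝ, ∀ t : ℕ, ‖x t‖ ≤ R := by
  classical
  have hτ0 : (0:ℝ) ≤ (τ : ℝ) := Nat.cast_nonneg τ
  have hγL : 0 < γ - L := by nlinarith [mul_nonneg (mul_nonneg hL.le hδ.le) hτ0]
  set i0 : Fin m := ⟨0, hm⟩ with hi0
  set Lobj : EuclideanSpace ℝ (Fin p) → ℝ := fun y => (m : ℝ)⁻¹ * ∑ j, Lf j y + h y with hLobj
  set D : ℕ → ℝ := fun s => ‖x (s + 1) - x s‖ with hDdef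
  have hDnn : ∀ s, 0 ≤ D s := fun s => norm_nonneg _
  set gv : ℕ → EuclideanSpace ℝ (Fin p) := fun t =>
    ((m : ℝ)⁻¹ • ∑ j, gradient (Lf j) (x (tj t j))) - gradient (Lf i0) (x (tj t i0)) with hgvdef
  -- Step 1: strong-min inequality
  have hmin : ∀ t, Lf i0 (x (t + 1)) + h (x (t + 1)) + ρ / 2 * D t ^ 2
      + ⟪gv t, x (t + 1) - x t⟫ + (γ - L) / 2 * D t ^ 2 ≤ Lf i0 (x t) + h (x t) := by
    intro t
    set G : EuclideanSpace ℝ (Fin p) → ℝ := fun y =>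
      Lf i0 y + h y + ρ / 2 * ‖y - x t‖ ^ 2 + ⟪gv t, y - x t⟫ with hGdef
    have hup : ∀ y, G (x (t + 1)) ≤ G y := fun y => hupdate t y
    have hconvG : ∀ s r : ℝ, 0 ≤ s → 0 ≤ r → s + r = 1 →
        G (s • x (t + 1) + r • x t) ≤ s * G (x (t + 1)) + r * G (x t)
          - s * r * ((γ - L) / 2) * ‖x (t + 1) - x t‖ ^ 2 := by
      intro s r hs hr hsr
      have hφ := (hstrong (x t)).2 (Set.mem_univ (x (t + 1))) (Set.mem_univ (x t)) hs hr hsr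
      simp only [smul_eq_mul] at hφ
      have hL1 := weak_cvx hL.le (hdiff i0) (hlip i0) (x (t + 1)) (x t) hs hr hsr
      have hzw : s • x (t + 1) + r • x t - x t = s • (x (t + 1) - x t) := by
        have hr' : r = 1 - s := by linarith
        rw [hr', smul_sub]
        module
      have hlin : ⟪gv t, s • x (t + 1) + r • x t - x t⟫ = s * ⟪gv t, x (t + 1) - x t⟫ := by
        rw [hzw, real_inner_smul_right]
      have hin0 : ⟪gv t, x t - x t⟫ = (0:ℝ) := by simp
      have hGz : G (s • x (t + 1) + r • x t)
          = Lf i0 (s • x (t + 1) + r • x t)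
            + (h (s • x (t + 1) + r • x t) + ρ / 2 * ‖s • x (t + 1) + r • x t - x t‖ ^ 2)
            + ⟪gv t, s • x (t + 1) + r • x t - x t⟫ := by rw [hGdef]; ring
      have hGu : G (x (t + 1)) = Lf i0 (x (t + 1))
          + (h (x (t + 1)) + ρ / 2 * ‖x (t + 1) - x t‖ ^ 2) + ⟪gv t, x (t + 1) - x t⟫ := by
        rw [hGdef]; ring
      have hGw : G (x t) = Lf i0 (x t) + (h (x t) + ρ / 2 * ‖x t - x t‖ ^ 2) + ⟪gv t, x t - x t⟫ := by
        rw [hGdef]; ring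
      rw [hGz, hGu, hGw, hlin, hin0]
      nlinarith [hφ, hL1]
    have hgap := strong_min_gap (μ := γ - L) (by linarith) hup hconvG
    have hGu : G (x (t + 1)) = Lf i0 (x (t + 1)) + h (x (t + 1))
        + ρ / 2 * ‖x (t + 1) - x t‖ ^ 2 + ⟪gv t, x (t + 1) - x t⟫ := rfl
    have hGw : G (x t) = Lf i0 (x t) + h (x t) := by
      rw [hGdef]; simp
    rw [hGu, hGw] at hgap
    have hDt : D t = ‖x (t + 1) - x t‖ := rfl
    rw [hDt]
    linarith [hgap]
  -- Step 2: average descent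
  have hm0 : (0:ℝ) < (m:ℝ) := Nat.cast_pos.2 hm
  have havg : ∀ t, (m : ℝ)⁻¹ * ∑ j, Lf j (x (t + 1)) ≤ (m : ℝ)⁻¹ * ∑ j, Lf j (x t)
      + ⟪(m : ℝ)⁻¹ • ∑ j, gradient (Lf j) (x t), x (t + 1) - x t⟫ + L / 2 * D t ^ 2 := by
    intro t
    have hsum : ∑ j, Lf j (x (t + 1))
        ≤ ∑ j, (Lf j (x t) + ⟪gradient (Lf j) (x t), x (t + 1) - x t⟫ + L / 2 * D t ^ 2) := by
      apply Finset.sum_le_sum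
      intro j _
      have := (abs_le.1 (taylor_bound hL.le (hdiff j) (hlip j) (x t) (x (t + 1)))).2
      have hDt : D t = ‖x (t + 1) - x t‖ := rfl
      rw [hDt]; linarith
    have hsum' := mul_le_mul_of_nonneg_left hsum (inv_nonneg.2 hm0.le)
    have hinner : ⟪(m : ℝ)⁻¹ • ∑ j, gradient (Lf j) (x t), x (t + 1) - x t⟫
        = (m : ℝ)⁻¹ * ∑ j, ⟪gradient (Lf j) (x t), x (t + 1) - x t⟫ := by
      rw [real_inner_smul_left, sum_inner]
    have hexp : (m : ℝ)⁻¹ * ∑ j, (Lf j (x t) + ⟪gradient (Lf j) (x t), x (t + 1) - x t⟫ + L / 2 * D t ^ 2)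
        = (m : ℝ)⁻¹ * ∑ j, Lf j (x t) + (m : ℝ)⁻¹ * ∑ j, ⟪gradient (Lf j) (x t), x (t + 1) - x t⟫
          + (m : ℝ)⁻¹ * ((m : ℝ) * (L / 2 * D t ^ 2)) := by
      rw [Finset.sum_add_distrib, Finset.sum_add_distrib, Finset.sum_const, Finset.card_univ,
        Fintype.card_fin, nsmul_eq_mul]
      ring
    rw [hexp] at hsum'
    rw [hinner]
    have : (m : ℝ)⁻¹ * ((m : ℝ) * (L / 2 * D t ^ 2)) = L / 2 * D t ^ 2 := by
      field_simp
    linarith [hsum']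
  -- Step 3: lower bound for Lf i0
  have hlb : ∀ t, Lf i0 (x t) + ⟪gradient (Lf i0) (x t), x (t + 1) - x t⟫ - L / 2 * D t ^ 2
      ≤ Lf i0 (x (t + 1)) := by
    intro t
    have := (abs_le.1 (taylor_bound hL.le (hdiff i0) (hlip i0) (x t) (x (t + 1)))).1
    have hDt : D t = ‖x (t + 1) - x t‖ := rfl
    rw [hDt]; linarith
  -- Step 4: delayed iterate distance bound
  have hxdiff : ∀ t (j : Fin m), ‖x t - x (tj t j)‖ ≤ ∑ s ∈ Finset.Ico (t - τ) t, D s := by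
    intro t j
    obtain ⟨h1, h2⟩ := htj t j
    have htel : x t - x (tj t j) = ∑ s ∈ Finset.Ico (tj t j) t, (x (s + 1) - x s) := by
      rw [Finset.sum_Ico_eq_sub _ h2, Finset.sum_range_sub (f := x), Finset.sum_range_sub (f := x)]
      abel
    calc ‖x t - x (tj t j)‖ = ‖∑ s ∈ Finset.Ico (tj t j) t, (x (s + 1) - x s)‖ := by rw [htel]
      _ ≤ ∑ s ∈ Finset.Ico (tj t j) t, D s := norm_sum_le _ _
      _ ≤ ∑ s ∈ Finset.Ico (t - τ) t, D s :=
        Finset.sum_le_sum_of_subset_of_nonneg (Finset.Ico_subset_Ico h1 le_rfl)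
          (fun s _ _ => hDnn s)
  -- Step 5: norm of the error vector
  have hwnorm : ∀ t, ‖((m : ℝ)⁻¹ • ∑ j, gradient (Lf j) (x t)) - gradient (Lf i0) (x t) - gv t‖
      ≤ 2 * L * ∑ s ∈ Finset.Ico (t - τ) t, D s := by
    intro t
    have hSnn : (0:ℝ) ≤ ∑ s ∈ Finset.Ico (t - τ) t, D s :=
      Finset.sum_nonneg fun s _ => hDnn s
    have e : ((m : ℝ)⁻¹ • ∑ j, gradient (Lf j) (x t)) - gradient (Lf i0) (x t) - gv t
        = ((m : ℝ)⁻¹ • ∑ j, (gradient (Lf j) (x t) - gradient (Lf j) (x (tj t j))))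
          - (gradient (Lf i0) (x t) - gradient (Lf i0) (x (tj t i0))) := by
      rw [hgvdef]
      simp only [Finset.sum_sub_distrib, smul_sub]
      abel
    rw [e]
    calc ‖((m : ℝ)⁻¹ • ∑ j, (gradient (Lf j) (x t) - gradient (Lf j) (x (tj t j))))
          - (gradient (Lf i0) (x t) - gradient (Lf i0) (x (tj t i0)))‖
        ≤ ‖(m : ℝ)⁻¹ • ∑ j, (gradient (Lf j) (x t) - gradient (Lf j) (x (tj t j)))‖
          + ‖gradient (Lf i0) (x t) - gradient (Lf i0) (x (tj t i0))‖ := norm_sub_le _ _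
      _ ≤ (m : ℝ)⁻¹ * ∑ j, ‖gradient (Lf j) (x t) - gradient (Lf j) (x (tj t j))‖
          + L * ‖x t - x (tj t i0)‖ := by
          gcongr
          · rw [norm_smul, Real.norm_eq_abs, abs_of_nonneg (inv_nonneg.2 hm0.le)]
            exact mul_le_mul_of_nonneg_left (norm_sum_le _ _) (inv_nonneg.2 hm0.le)
          · exact hlip i0 _ _
      _ ≤ (m : ℝ)⁻¹ * ∑ j : Fin m, (L * ∑ s ∈ Finset.Ico (t - τ) t, D s)
          + L * ∑ s ∈ Finset.Ico (t - τ) t, D s := by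
          gcongr with j
          · calc ‖gradient (Lf j) (x t) - gradient (Lf j) (x (tj t j))‖
                ≤ L * ‖x t - x (tj t j)‖ := hlip j _ _
              _ ≤ L * ∑ s ∈ Finset.Ico (t - τ) t, D s :=
                mul_le_mul_of_nonneg_left (hxdiff t j) hL.le
          · exact hxdiff t i0
      _ = 2 * L * ∑ s ∈ Finset.Ico (t - τ) t, D s := by
          rw [Finset.sum_const, Finset.card_univ, Fintype.card_fin, nsmul_eq_mul]
          field_simp
          ring
  -- Step 6: main descent inequality
  have hmain : ∀ t, Lobj (x (t + 1)) ≤ Lobj (x t)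
      + 2 * L * (∑ s ∈ Finset.Ico (t - τ) t, D s) * D t
      + (L - ρ / 2 - (γ - L) / 2) * D t ^ 2 := by
    intro t
    have h1 := havg t
    have h2 := hlb t
    have h3 := hmin t
    have hip : ⟪((m : ℝ)⁻¹ • ∑ j, gradient (Lf j) (x t)) - gradient (Lf i0) (x t) - gv t,
        x (t + 1) - x t⟫
        = ⟪(m : ℝ)⁻¹ • ∑ j, gradient (Lf j) (x t), x (t + 1) - x t⟫
          - ⟪gradient (Lf i0) (x t), x (t + 1) - x t⟫ - ⟪gv t, x (t + 1) - x t⟫ := by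
      rw [inner_sub_left, inner_sub_left]
    have hipb : ⟪((m : ℝ)⁻¹ • ∑ j, gradient (Lf j) (x t)) - gradient (Lf i0) (x t) - gv t,
        x (t + 1) - x t⟫ ≤ 2 * L * (∑ s ∈ Finset.Ico (t - τ) t, D s) * D t := by
      calc ⟪((m : ℝ)⁻¹ • ∑ j, gradient (Lf j) (x t)) - gradient (Lf i0) (x t) - gv t,
            x (t + 1) - x t⟫
          ≤ ‖((m : ℝ)⁻¹ • ∑ j, gradient (Lf j) (x t)) - gradient (Lf i0) (x t) - gv t‖
            * ‖x (t + 1) - x t‖ := real_inner_le_norm _ _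
        _ ≤ 2 * L * (∑ s ∈ Finset.Ico (t - τ) t, D s) * D t := by
            have hDt : D t = ‖x (t + 1) - x t‖ := rfl
            rw [hDt]
            exact mul_le_mul_of_nonneg_right (hwnorm t) (norm_nonneg _)
    rw [hip] at hipb
    have hO1 : Lobj (x (t + 1)) = (m : ℝ)⁻¹ * ∑ j, Lf j (x (t + 1)) + h (x (t + 1)) := rfl
    have hO2 : Lobj (x t) = (m : ℝ)⁻¹ * ∑ j, Lf j (x t) + h (x t) := rfl
    rw [hO1, hO2]
    linarith
  -- Step 7: cross term bound
  have hcross : ∀ t, 2 * L * (∑ s ∈ Finset.Ico (t - τ) t, D s) * D t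
      ≤ L * δ * τ * D t ^ 2 + L / δ * ∑ s ∈ Finset.Ico (t - τ) t, D s ^ 2 := by
    intro t
    have hcard : ((Finset.Ico (t - τ) t).card : ℝ) ≤ (τ : ℝ) := by
      rw [Nat.card_Ico]
      exact Nat.cast_le.2 (by omega)
    have hdd : L / δ * δ ^ 2 = L * δ := by field_simp
    have hterm : ∀ s, 2 * L * D s * D t ≤ L * δ * D t ^ 2 + L / δ * D s ^ 2 := by
      intro s
      have h0 : (0:ℝ) ≤ L / δ * (δ * D t - D s) ^ 2 :=
        mul_nonneg (div_nonneg hL.le hδ.le) (sq_nonneg _)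
      have he : L / δ * (δ * D t - D s) ^ 2
          = L * δ * D t ^ 2 - 2 * L * D s * D t + L / δ * D s ^ 2 := by
        field_simp
        ring
      linarith [he ▸ h0]
    calc 2 * L * (∑ s ∈ Finset.Ico (t - τ) t, D s) * D t
        = ∑ s ∈ Finset.Ico (t - τ) t, 2 * L * D s * D t := by
          rw [Finset.mul_sum, Finset.sum_mul]
      _ ≤ ∑ s ∈ Finset.Ico (t - τ) t, (L * δ * D t ^ 2 + L / δ * D s ^ 2) :=
          Finset.sum_le_sum fun s _ => hterm s
      _ = ((Finset.Ico (t - τ) t).card : ℝ) * (L * δ * D t ^ 2)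
          + L / δ * ∑ s ∈ Finset.Ico (t - τ) t, D s ^ 2 := by
          rw [Finset.sum_add_distrib, Finset.sum_const, nsmul_eq_mul, Finset.mul_sum]
      _ ≤ L * δ * τ * D t ^ 2 + L / δ * ∑ s ∈ Finset.Ico (t - τ) t, D s ^ 2 := by
          have : ((Finset.Ico (t - τ) t).card : ℝ) * (L * δ * D t ^ 2) ≤ (τ:ℝ) * (L * δ * D t ^ 2) :=
            mul_le_mul_of_nonneg_right hcard (by positivity)
          linarith
  -- Step 8: weighted sum identity
  have hsumid : ∀ t, ∑ s ∈ Finset.Ico (t + 1 - τ) (t + 1), (((s:ℝ) - ((t+1:ℕ):ℝ) + τ + 1) * D s ^ 2)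
      ≤ ∑ s ∈ Finset.Ico (t - τ) t, (((s:ℝ) - (t:ℝ) + τ + 1) * D s ^ 2)
        + (τ:ℝ) * D t ^ 2 - ∑ s ∈ Finset.Ico (t - τ) t, D s ^ 2 := by
    intro t
    rcases Nat.eq_zero_or_pos τ with hτ | hτ
    · subst hτ
      simp
    · have hle : t + 1 - τ ≤ t := by omega
      rw [Finset.sum_Ico_succ_top hle]
      have hwt : ((t:ℝ) - ((t+1:ℕ):ℝ) + τ + 1) = (τ:ℝ) := by push_cast; ring
      have hmono : ∑ s ∈ Finset.Ico (t + 1 - τ) t, (((s:ℝ) - ((t+1:ℕ):ℝ) + τ + 1) * D s ^ 2)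
          ≤ ∑ s ∈ Finset.Ico (t - τ) t, (((s:ℝ) - ((t+1:ℕ):ℝ) + τ + 1) * D s ^ 2) := by
        apply Finset.sum_le_sum_of_subset_of_nonneg
          (Finset.Ico_subset_Ico (by omega) le_rfl)
        intro s hs _
        have hst : t ≤ s + τ := by
          have := (Finset.mem_Ico.1 hs).1
          omega
        have : (0:ℝ) ≤ (s:ℝ) - ((t+1:ℕ):ℝ) + τ + 1 := by
          have : (t:ℝ) ≤ (s:ℝ) + (τ:ℝ) := by exact_mod_cast hst
          push_cast
          linarith
        positivity
      have hsplit : ∑ s ∈ Finset.Ico (t - τ) t, (((s:ℝ) - ((t+1:ℕ):ℝ) + τ + 1) * D s ^ 2)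
          = ∑ s ∈ Finset.Ico (t - τ) t, (((s:ℝ) - (t:ℝ) + τ + 1) * D s ^ 2)
            - ∑ s ∈ Finset.Ico (t - τ) t, D s ^ 2 := by
        rw [← Finset.sum_sub_distrib]
        apply Finset.sum_congr rfl
        intro s _
        push_cast
        ring
      rw [hwt]
      linarith
  -- Lyapunov function
  set Phi : ℕ → ℝ := fun t => Lobj (x t)
      + L / δ * ∑ s ∈ Finset.Ico (t - τ) t, (((s:ℝ) - (t:ℝ) + τ + 1) * D s ^ 2) with hPhidef
  have hcnn : (0:ℝ) ≤ L / δ := div_nonneg hL.le hδ.le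
  have hK : L + L * δ * τ + L / δ * τ - ρ / 2 - (γ - L) / 2 ≤ 0 := by
    have e1 : L / δ * τ = 2 * L * (τ:ℝ) / δ / 2 := by ring
    linarith [hA1, hA2, e1]
  have hPhistep : ∀ t, Phi (t + 1) ≤ Phi t := by
    intro t
    have h1 := hmain t
    have h2 := hcross t
    have h3 := hsumid t
    have h3' := mul_le_mul_of_nonneg_left h3 hcnn
    have hP1 : Phi (t + 1) = Lobj (x (t + 1))
        + L / δ * ∑ s ∈ Finset.Ico (t + 1 - τ) (t + 1), (((s:ℝ) - ((t+1:ℕ):ℝ) + τ + 1) * D s ^ 2) := rfl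
    have hP0 : Phi t = Lobj (x t)
        + L / δ * ∑ s ∈ Finset.Ico (t - τ) t, (((s:ℝ) - (t:ℝ) + τ + 1) * D s ^ 2) := rfl
    have hdist : L / δ * (∑ s ∈ Finset.Ico (t - τ) t, (((s:ℝ) - (t:ℝ) + τ + 1) * D s ^ 2)
          + (τ:ℝ) * D t ^ 2 - ∑ s ∈ Finset.Ico (t - τ) t, D s ^ 2)
        = L / δ * ∑ s ∈ Finset.Ico (t - τ) t, (((s:ℝ) - (t:ℝ) + τ + 1) * D s ^ 2)
          + L / δ * τ * D t ^ 2 - L / δ * ∑ s ∈ Finset.Ico (t - τ) t, D s ^ 2 := by ring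
    rw [hdist] at h3'
    have hKD : (L + L * δ * τ + L / δ * τ - ρ / 2 - (γ - L) / 2) * D t ^ 2 ≤ 0 :=
      mul_nonpos_iff.2 (Or.inr ⟨hK, sq_nonneg _⟩)
    rw [hP1, hP0]
    nlinarith [h1, h2, h3', hKD]
  have hPhimono : ∀ t, Phi t ≤ Phi 0 := by
    intro t
    induction t with
    | zero => exact le_refl _
    | succ n ih => exact (hPhistep n).trans ih
  have hPhi0 : Phi 0 = Lobj (x 0) := by
    have : (0:ℕ) - τ = 0 := by omega
    rw [hPhidef]
    simp [this]
  have hlower : ∀ t, Lobj (x t) ≤ Phi t := by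
    intro t
    have hs : (0:ℝ) ≤ ∑ s ∈ Finset.Ico (t - τ) t, (((s:ℝ) - (t:ℝ) + τ + 1) * D s ^ 2) := by
      apply Finset.sum_nonneg
      intro s hs
      have hst : t ≤ s + τ := by
        have := (Finset.mem_Ico.1 hs).1
        omega
      have hw : (0:ℝ) ≤ (s:ℝ) - (t:ℝ) + τ + 1 := by
        have : (t:ℝ) ≤ (s:ℝ) + (τ:ℝ) := by exact_mod_cast hst
        linarith
      positivity
    have : 0 ≤ L / δ * ∑ s ∈ Finset.Ico (t - τ) t, (((s:ℝ) - (t:ℝ) + τ + 1) * D s ^ 2) :=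
      mul_nonneg hcnn hs
    rw [hPhidef]
    linarith
  have hbdd : ∀ t, Lobj (x t) ≤ Lobj (x 0) := by
    intro t
    have := (hlower t).trans (hPhimono t)
    rw [hPhi0] at this
    exact this
  -- coercivity
  have hev : ∀ᶠ b in Filter.atTop, ∀ y : EuclideanSpace ℝ (Fin p), ‖y‖ = b →
      Lobj (x 0) + 1 ≤ Lobj y := by
    have h1 := hcoer.eventually (Filter.eventually_ge_atTop (Lobj (x 0) + 1))
    exact Filter.eventually_comap.1 h1
  obtain ⟨M, hM⟩ := Filter.eventually_atTop.1 hev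
  refine ⟨M, fun t => ?_⟩
  by_contra hcon
  push_neg at hcon
  have h1 := hM ‖x t‖ hcon.le (x t) rfl
  linarith [hbdd t]
end

section
/- For every iteration t ≥ 0, the proximal gradient of 𝓛 at the iterate x^t is bounded by iterate gaps: ‖∇̃𝓛(x^t)‖ = ‖x^t − Prox_h(x^t − (1/m)Σ_{j=1}^m ∇L_j(x^t))‖ ≤ (2 + ρ)‖Δ^{(t)}‖ + 2L Σ_{k=0}^{τ} ‖Δ^{(t−k)}‖. -/
open scoped RealInnerProductSpace

lemma prox_subgrad {E : Type*} [NormedAddCommGroup E] [InnerProductSpace ℝ E]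
    {h : E → ℝ} (hconv : ConvexOn ℝ Set.univ h) {y z : E}
    (hy : ∀ w, h y + 1 / 2 * ‖y - z‖ ^ 2 ≤ h w + 1 / 2 * ‖w - z‖ ^ 2) (w : E) :
    h y ≤ h w + ⟪y - z, w - y⟫ := by
  refine le_of_forall_pos_le_add fun ε hε => ?_
  set K : ℝ := ‖w - y‖ ^ 2 with hK
  have hK0 : 0 ≤ K := sq_nonneg _
  set lam : ℝ := min 1 (2 * ε / (K + 1)) with hlam
  have hlam0 : 0 < lam := lt_min one_pos (by positivity)
  have hlam1 : lam ≤ 1 := min_le_left _ _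
  have hlam2 : lam * (K + 1) ≤ 2 * ε := by
    have h1 : lam ≤ 2 * ε / (K + 1) := min_le_right _ _
    have h2 : (0:ℝ) < K + 1 := by linarith
    calc lam * (K + 1) ≤ (2 * ε / (K + 1)) * (K + 1) := by nlinarith
      _ = 2 * ε := by field_simp
  have hcv : h (y + lam • (w - y)) ≤ (1 - lam) * h y + lam * h w := by
    have h4 := hconv.2 (Set.mem_univ y) (Set.mem_univ w)
      (by linarith : (0:ℝ) ≤ 1 - lam) (le_of_lt hlam0) (by ring)
    have he : (1 - lam) • y + lam • w = y + lam • (w - y) := by module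
    rwa [he] at h4
  have hnorm : ‖y + lam • (w - y) - z‖ ^ 2
      = ‖y - z‖ ^ 2 + 2 * (lam * ⟪y - z, w - y⟫) + lam ^ 2 * K := by
    have he : y + lam • (w - y) - z = (y - z) + lam • (w - y) := by module
    rw [he, norm_add_sq_real, real_inner_smul_right, norm_smul]
    simp [hK, abs_of_pos hlam0]
    ring
  have hyy := hy (y + lam • (w - y))
  rw [hnorm] at hyy
  have key : lam * h y ≤ lam * (h w + ⟪y - z, w - y⟫ + lam / 2 * K) := by nlinarith
  have key2 : h y ≤ h w + ⟪y - z, w - y⟫ + lam / 2 * K := (mul_le_mul_iff_right₀ hlam0).mp key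
  nlinarith

lemma prox_nonexp {E : Type*} [NormedAddCommGroup E] [InnerProductSpace ℝ E]
    {h : E → ℝ} (hconv : ConvexOn ℝ Set.univ h)
    {prox : E → E}
    (hprox : ∀ z y, h (prox z) + 1 / 2 * ‖prox z - z‖ ^ 2 ≤ h y + 1 / 2 * ‖y - z‖ ^ 2)
    (z₁ z₂ : E) : ‖prox z₁ - prox z₂‖ ≤ ‖z₁ - z₂‖ := by
  set y₁ := prox z₁
  set y₂ := prox z₂
  have h1 : h y₁ ≤ h y₂ + ⟪y₁ - z₁, y₂ - y₁⟫ := prox_subgrad hconv (hprox z₁) y₂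
  have h2 : h y₂ ≤ h y₁ + ⟪y₂ - z₂, y₁ - y₂⟫ := prox_subgrad hconv (hprox z₂) y₁
  have hsum : 0 ≤ ⟪y₁ - z₁, y₂ - y₁⟫ + ⟪y₂ - z₂, y₁ - y₂⟫ := by linarith
  have hin : ⟪y₁ - z₁, y₂ - y₁⟫ + ⟪y₂ - z₂, y₁ - y₂⟫
      = ⟪z₁ - z₂, y₁ - y₂⟫ - ‖y₁ - y₂‖ ^ 2 := by
    have e1 : y₂ - y₁ = -(y₁ - y₂) := by abel
    rw [e1, inner_neg_right]
    have e2 : (y₂ - z₂) - (y₁ - z₁) = (z₁ - z₂) - (y₁ - y₂) := by abel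
    have e3 : ⟪(y₂ - z₂) - (y₁ - z₁), y₁ - y₂⟫
        = -⟪y₁ - z₁, y₁ - y₂⟫ + ⟪y₂ - z₂, y₁ - y₂⟫ := by rw [inner_sub_left]; ring
    rw [← e3, e2, inner_sub_left, real_inner_self_eq_norm_sq]
  rw [hin] at hsum
  have hle : ‖y₁ - y₂‖ ^ 2 ≤ ‖z₁ - z₂‖ * ‖y₁ - y₂‖ := by
    have := real_inner_le_norm (z₁ - z₂) (y₁ - y₂)
    linarith
  nlinarith [norm_nonneg (y₁ - y₂), norm_nonneg (z₁ - z₂), sq_nonneg (‖y₁ - y₂‖ - ‖z₁ - z₂‖)]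

set_option maxHeartbeats 1000000 in
theorem stmt_8
    {p m τ : ℕ} (hp : 1 ≤ p) (hm : 0 < m)
    {L ρ : ℝ}
    (hL : 0 < L) (hρ : 0 < ρ)
    (Lf : Fin m → EuclideanSpace ℝ (Fin p) → ℝ)
    (hdiff : ∀ j, Differentiable ℝ (Lf j))
    (hlip : ∀ j (u v : EuclideanSpace ℝ (Fin p)), ‖gradient (Lf j) u - gradient (Lf j) v‖ ≤ L * ‖u - v‖)
    (h : EuclideanSpace ℝ (Fin p) → ℝ)
    (hconv : ConvexOn ℝ Set.univ h)
    (tj : ℕ → Fin m → ℕ)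
    (htj : ∀ t j, t - τ ≤ tj t j ∧ tj t j ≤ t)
    (x : ℕ → EuclideanSpace ℝ (Fin p))
    (hupdate : ∀ t, ∀ y : EuclideanSpace ℝ (Fin p),
      Lf ⟨0, hm⟩ (x (t + 1)) + h (x (t + 1)) + ρ / 2 * ‖x (t + 1) - x t‖ ^ 2 +
          ⟪((m : ℝ)⁻¹ • ∑ j, gradient (Lf j) (x (tj t j))) - gradient (Lf ⟨0, hm⟩) (x (tj t ⟨0, hm⟩)), x (t + 1) - x t⟫ ≤
        Lf ⟨0, hm⟩ y + h y + ρ / 2 * ‖y - x t‖ ^ 2 +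
          ⟪((m : ℝ)⁻¹ • ∑ j, gradient (Lf j) (x (tj t j))) - gradient (Lf ⟨0, hm⟩) (x (tj t ⟨0, hm⟩)), y - x t⟫)
    (Δ : ℤ → EuclideanSpace ℝ (Fin p))
    (hΔ : ∀ s : ℤ, 0 ≤ s → Δ s = x (s.toNat + 1) - x s.toNat)
    (hΔneg : ∀ s : ℤ, s < 0 → Δ s = 0)
    (prox : EuclideanSpace ℝ (Fin p) → EuclideanSpace ℝ (Fin p))
    (hprox : ∀ z y, h (prox z) + 1 / 2 * ‖prox z - z‖ ^ 2 ≤ h y + 1 / 2 * ‖y - z‖ ^ 2)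
    (hproxuniq : ∀ z y, (∀ w, h y + 1 / 2 * ‖y - z‖ ^ 2 ≤ h w + 1 / 2 * ‖w - z‖ ^ 2) → y = prox z)
    (t : ℕ)
    :
    ‖(x t - prox (x t - (m : ℝ)⁻¹ • (∑ j, gradient (Lf j) (x t))))‖ ≤
      (2 + ρ) * ‖Δ (t : ℤ)‖ + 2 * L * ∑ k ∈ Finset.range (τ + 1), ‖Δ ((t : ℤ) - (k : ℤ))‖ := by
  classical
  set X : EuclideanSpace ℝ (Fin p) := x (t + 1) with hXdef
  set v : EuclideanSpace ℝ (Fin p) :=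
    ((m : ℝ)⁻¹ • ∑ j, gradient (Lf j) (x (tj t j))) - gradient (Lf ⟨0, hm⟩) (x (tj t ⟨0, hm⟩)) with hvdef
  set u : EuclideanSpace ℝ (Fin p) :=
    gradient (Lf ⟨0, hm⟩) X + ρ • (X - x t) + v with hudef
  -- Step 1: key directional optimality inequality
  have hkey : ∀ w, h X ≤ h w + ⟪u, w - X⟫ := by
    intro w
    set d : EuclideanSpace ℝ (Fin p) := w - X with hd
    set φ : ℝ → ℝ := fun s => Lf ⟨0, hm⟩ (X + s • d) with hφdef
    have hline : HasDerivAt (fun s : ℝ => X + s • d) d 0 := by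
      simpa using ((hasDerivAt_id (0 : ℝ)).smul_const d).const_add X
    have hF : HasFDerivAt (Lf ⟨0, hm⟩)
        (InnerProductSpace.toDual ℝ _ (gradient (Lf ⟨0, hm⟩) X))
        ((fun s : ℝ => X + s • d) 0) := by
      simpa using (hdiff ⟨0, hm⟩ X).hasGradientAt.hasFDerivAt
    have hφ : HasDerivAt φ ⟪gradient (Lf ⟨0, hm⟩) X, d⟫ 0 := by
      simpa [Function.comp_def, InnerProductSpace.toDual_apply_apply] using
        hF.comp_hasDerivAt 0 hline
    have hslope : Filter.Tendsto (slope φ 0) (nhdsWithin 0 (Set.Ioi (0:ℝ)))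
        (nhds ⟪gradient (Lf ⟨0, hm⟩) X, d⟫) :=
      (hasDerivAt_iff_tendsto_slope.mp hφ).mono_left
        (nhdsWithin_mono 0 (fun s hs => ne_of_gt hs))
    have hc : Filter.Tendsto (fun s : ℝ => ρ * s / 2 * ‖d‖ ^ 2)
        (nhdsWithin 0 (Set.Ioi (0:ℝ))) (nhds 0) := by
      have hcont : Continuous fun s : ℝ => ρ * s / 2 * ‖d‖ ^ 2 := by fun_prop
      have := (hcont.tendsto 0).mono_left (nhdsWithin_le_nhds : nhdsWithin (0:ℝ) (Set.Ioi 0) ≤ nhds 0)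
      simpa using this
    have hlim : Filter.Tendsto
        (fun s : ℝ => h w + slope φ 0 s + ρ * ⟪X - x t, d⟫ + ρ * s / 2 * ‖d‖ ^ 2 + ⟪v, d⟫)
        (nhdsWithin 0 (Set.Ioi (0:ℝ)))
        (nhds (h w + ⟪gradient (Lf ⟨0, hm⟩) X, d⟫ + ρ * ⟪X - x t, d⟫ + 0 + ⟪v, d⟫)) := by
      exact (((tendsto_const_nhds.add hslope).add tendsto_const_nhds).add hc).add
        tendsto_const_nhds
    have hstep : ∀ s : ℝ, s ∈ Set.Ioc (0:ℝ) 1 →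
        h X ≤ h w + slope φ 0 s + ρ * ⟪X - x t, d⟫ + ρ * s / 2 * ‖d‖ ^ 2 + ⟪v, d⟫ := by
      intro s hs
      have hs0 : (0:ℝ) < s := hs.1
      have hs1 : s ≤ 1 := hs.2
      have hu := hupdate t (X + s • d)
      have e1 : X + s • d - x t = (X - x t) + s • d := by module
      have e2 : ‖(X - x t) + s • d‖ ^ 2
          = ‖X - x t‖ ^ 2 + 2 * (s * ⟪X - x t, d⟫) + s ^ 2 * ‖d‖ ^ 2 := by
        rw [norm_add_sq_real, real_inner_smul_right, norm_smul]
        simp [abs_of_pos hs0]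
        ring
      have e3 : ⟪v, (X - x t) + s • d⟫ = ⟪v, X - x t⟫ + s * ⟪v, d⟫ := by
        rw [inner_add_right, real_inner_smul_right]
      have e4 : h (X + s • d) ≤ (1 - s) * h X + s * h w := by
        have h4 := hconv.2 (Set.mem_univ X) (Set.mem_univ w)
          (by linarith : (0:ℝ) ≤ 1 - s) (le_of_lt hs0) (by ring)
        have he : (1 - s) • X + s • w = X + s • d := by rw [hd]; module
        rwa [he] at h4
      rw [e1, e2, e3] at hu
      have hφ0 : φ 0 = Lf ⟨0, hm⟩ X := by simp [hφdef]
      have hslope_eq : slope φ 0 s = (φ s - φ 0) / s := by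
        simp [slope, div_eq_inv_mul]
      have hφs : φ s = Lf ⟨0, hm⟩ (X + s • d) := rfl
      have key2 : s * h X ≤ s * (h w + (φ s - φ 0) / s + ρ * ⟪X - x t, d⟫
          + ρ * s / 2 * ‖d‖ ^ 2 + ⟪v, d⟫) := by
        have hexp : s * (h w + (φ s - φ 0) / s + ρ * ⟪X - x t, d⟫
            + ρ * s / 2 * ‖d‖ ^ 2 + ⟪v, d⟫)
            = s * h w + (φ s - φ 0) + s * (ρ * ⟪X - x t, d⟫)
              + s ^ 2 * (ρ / 2 * ‖d‖ ^ 2) + s * ⟪v, d⟫ := by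
          field_simp
        rw [hexp, hφ0, hφs]
        nlinarith [hu, e4]
      rw [hslope_eq]
      exact (mul_le_mul_iff_right₀ hs0).mp key2
    have hev : ∀ᶠ s in nhdsWithin 0 (Set.Ioi (0:ℝ)),
        h X ≤ h w + slope φ 0 s + ρ * ⟪X - x t, d⟫ + ρ * s / 2 * ‖d‖ ^ 2 + ⟪v, d⟫ := by
      filter_upwards [Ioc_mem_nhdsGT_of_mem (by simp : (0:ℝ) ∈ Set.Ico (0:ℝ) 1)] with s hs
        using hstep s hs
    have hfin := ge_of_tendsto hlim hev
    have hinner : ⟪u, w - X⟫ = ⟪gradient (Lf ⟨0, hm⟩) X, d⟫ + ρ * ⟪X - x t, d⟫ + ⟪v, d⟫ := by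
      rw [hudef, ← hd, inner_add_left, inner_add_left, real_inner_smul_left]
    rw [hinner]
    linarith
  -- Step 2: X is the prox of X - u
  have hXprox : X = prox (X - u) := by
    apply hproxuniq
    intro w
    have hk := hkey w
    have eu : X - (X - u) = u := by abel
    have ew : w - (X - u) = (w - X) + u := by abel
    have ew2 : ‖w - X + u‖ ^ 2 = ‖w - X‖ ^ 2 + 2 * ⟪w - X, u⟫ + ‖u‖ ^ 2 :=
      norm_add_sq_real _ _
    have hcm : ⟪w - X, u⟫ = ⟪u, w - X⟫ := real_inner_comm _ _
    rw [eu, ew, ew2]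
    nlinarith [sq_nonneg ‖w - X‖]
  -- Step 3: telescoping bounds
  have hΔnat : ∀ a : ℕ, Δ (a : ℤ) = x (a + 1) - x a := fun a => by
    simpa using hΔ (a : ℤ) (by positivity)
  set T : ℝ := ∑ j ∈ Finset.range τ, ‖Δ ((t : ℤ) - ((j : ℤ) + 1))‖ with hTdef
  have hT0 : 0 ≤ T := Finset.sum_nonneg fun _ _ => norm_nonneg _
  have htel : ∀ a : ℕ, a ≤ t → t - a ≤ τ → ‖x t - x a‖ ≤ T := by
    intro a ha hτa
    set n := t - a with hn
    have h1 : ∑ i ∈ Finset.range n, (x (a + (i + 1)) - x (a + i)) = x t - x a := by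
      rw [Finset.sum_range_sub (fun i => x (a + i)) n]
      have hat : a + n = t := by omega
      rw [hat]
      simp
    have h2 : ‖x t - x a‖ ≤ ∑ i ∈ Finset.range n, ‖x (a + (i + 1)) - x (a + i)‖ := by
      rw [← h1]; exact norm_sum_le _ _
    have hrefl : ∑ i ∈ Finset.range n, ‖x (a + (i + 1)) - x (a + i)‖
        = ∑ j ∈ Finset.range n, ‖x (a + ((n - 1 - j) + 1)) - x (a + (n - 1 - j))‖ :=
      (Finset.sum_range_reflect (fun i => ‖x (a + (i + 1)) - x (a + i)‖) n).symm
    have hterm : ∀ j ∈ Finset.range n,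
        ‖x (a + ((n - 1 - j) + 1)) - x (a + (n - 1 - j))‖ = ‖Δ ((t : ℤ) - ((j : ℤ) + 1))‖ := by
      intro j hj
      have hj' : j < n := Finset.mem_range.mp hj
      have hpos : (0 : ℤ) ≤ (t : ℤ) - ((j : ℤ) + 1) := by omega
      rw [hΔ _ hpos]
      rw [show ((t : ℤ) - ((j : ℤ) + 1)).toNat = a + (n - 1 - j) from by omega]
      rw [show a + ((n - 1 - j) + 1) = a + (n - 1 - j) + 1 from by omega]
    have hsub : ∑ j ∈ Finset.range n, ‖Δ ((t : ℤ) - ((j : ℤ) + 1))‖ ≤ T := by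
      apply Finset.sum_le_sum_of_subset_of_nonneg
      · exact Finset.range_subset_range.mpr (by omega)
      · intro _ _ _; exact norm_nonneg _
    calc ‖x t - x a‖ ≤ ∑ i ∈ Finset.range n, ‖x (a + (i + 1)) - x (a + i)‖ := h2
      _ = ∑ j ∈ Finset.range n, ‖Δ ((t : ℤ) - ((j : ℤ) + 1))‖ := by
          rw [hrefl]; exact Finset.sum_congr rfl hterm
      _ ≤ T := hsub
  have hS : ∑ k ∈ Finset.range (τ + 1), ‖Δ ((t : ℤ) - (k : ℤ))‖ = ‖Δ (t : ℤ)‖ + T := by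
    rw [Finset.sum_range_succ']
    push_cast
    simp only [sub_zero]
    ring
  have hΔt : Δ (t : ℤ) = X - x t := hΔnat t
  -- Step 4: assembly
  set zs : EuclideanSpace ℝ (Fin p) := x t - (m : ℝ)⁻¹ • (∑ j, gradient (Lf j) (x t)) with hzs
  have htri : ‖x t - prox zs‖ ≤ ‖x t - X‖ + ‖X - prox zs‖ := by
    have h5 := norm_add_le (x t - X) (X - prox zs)
    rw [sub_add_sub_cancel] at h5
    exact h5
  have hne : ‖X - prox zs‖ ≤ ‖(X - u) - zs‖ := by
    have h6 := prox_nonexp hconv hprox (X - u) zs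
    rwa [← hXprox] at h6
  have hz : (X - u) - zs = (1 - ρ) • (X - x t)
      + (gradient (Lf ⟨0, hm⟩) (x (tj t ⟨0, hm⟩)) - gradient (Lf ⟨0, hm⟩) X)
      + (m : ℝ)⁻¹ • (∑ j, (gradient (Lf j) (x t) - gradient (Lf j) (x (tj t j)))) := by
    rw [hudef, hvdef, hzs, Finset.sum_sub_distrib, smul_sub]
    module
  have hb1 : ‖(1 - ρ) • (X - x t)‖ ≤ (1 + ρ) * ‖X - x t‖ := by
    rw [norm_smul, Real.norm_eq_abs]
    exact mul_le_mul_of_nonneg_right (abs_le.mpr ⟨by linarith, by linarith⟩) (norm_nonneg _)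
  have hxa1 : ‖x t - x (tj t ⟨0, hm⟩)‖ ≤ T :=
    htel _ (htj t ⟨0, hm⟩).2 (by have := (htj t ⟨0, hm⟩).1; omega)
  have hb2 : ‖gradient (Lf ⟨0, hm⟩) (x (tj t ⟨0, hm⟩)) - gradient (Lf ⟨0, hm⟩) X‖
      ≤ L * (‖X - x t‖ + T) := by
    calc ‖gradient (Lf ⟨0, hm⟩) (x (tj t ⟨0, hm⟩)) - gradient (Lf ⟨0, hm⟩) X‖
        ≤ L * ‖x (tj t ⟨0, hm⟩) - X‖ := hlip _ _ _
      _ ≤ L * (‖x t - X‖ + ‖x t - x (tj t ⟨0, hm⟩)‖) := by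
          have h7 : ‖x (tj t ⟨0, hm⟩) - X‖ ≤ ‖x (tj t ⟨0, hm⟩) - x t‖ + ‖x t - X‖ :=
            norm_sub_le_norm_sub_add_norm_sub _ _ _
          rw [norm_sub_rev (x (tj t ⟨0, hm⟩)) (x t)] at h7
          exact mul_le_mul_of_nonneg_left (by linarith) (le_of_lt hL)
      _ ≤ L * (‖X - x t‖ + T) := by
          rw [norm_sub_rev (x t) X]
          exact mul_le_mul_of_nonneg_left (by linarith [hxa1]) (le_of_lt hL)
  have hb3 : ‖(m : ℝ)⁻¹ • (∑ j, (gradient (Lf j) (x t) - gradient (Lf j) (x (tj t j))))‖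
      ≤ L * T := by
    have hm' : (0 : ℝ) < m := by exact_mod_cast hm
    have hsum : ‖∑ j, (gradient (Lf j) (x t) - gradient (Lf j) (x (tj t j)))‖
        ≤ (m : ℝ) * (L * T) := by
      calc ‖∑ j, (gradient (Lf j) (x t) - gradient (Lf j) (x (tj t j)))‖
          ≤ ∑ j : Fin m, ‖gradient (Lf j) (x t) - gradient (Lf j) (x (tj t j))‖ :=
            norm_sum_le _ _
        _ ≤ ∑ _j : Fin m, L * T := by
            apply Finset.sum_le_sum
            intro j _
            calc ‖gradient (Lf j) (x t) - gradient (Lf j) (x (tj t j))‖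
                ≤ L * ‖x t - x (tj t j)‖ := hlip _ _ _
              _ ≤ L * T := mul_le_mul_of_nonneg_left
                  (htel _ (htj t j).2 (by have := (htj t j).1; omega)) (le_of_lt hL)
        _ = (m : ℝ) * (L * T) := by simp [Finset.sum_const, mul_comm]
    rw [norm_smul, Real.norm_eq_abs, abs_of_pos (by positivity : (0:ℝ) < (m : ℝ)⁻¹)]
    calc (m : ℝ)⁻¹ * ‖∑ j, (gradient (Lf j) (x t) - gradient (Lf j) (x (tj t j)))‖
        ≤ (m : ℝ)⁻¹ * ((m : ℝ) * (L * T)) := by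
          exact mul_le_mul_of_nonneg_left hsum (by positivity)
      _ = L * T := by field_simp
  have hzn : ‖(X - u) - zs‖ ≤ (1 + ρ) * ‖X - x t‖ + L * (‖X - x t‖ + T) + L * T := by
    rw [hz]
    calc ‖(1 - ρ) • (X - x t)
        + (gradient (Lf ⟨0, hm⟩) (x (tj t ⟨0, hm⟩)) - gradient (Lf ⟨0, hm⟩) X)
        + (m : ℝ)⁻¹ • (∑ j, (gradient (Lf j) (x t) - gradient (Lf j) (x (tj t j))))‖
        ≤ ‖(1 - ρ) • (X - x t)
            + (gradient (Lf ⟨0, hm⟩) (x (tj t ⟨0, hm⟩)) - gradient (Lf ⟨0, hm⟩) X)‖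
          + ‖(m : ℝ)⁻¹ • (∑ j, (gradient (Lf j) (x t) - gradient (Lf j) (x (tj t j))))‖ :=
          norm_add_le _ _
      _ ≤ (‖(1 - ρ) • (X - x t)‖
            + ‖gradient (Lf ⟨0, hm⟩) (x (tj t ⟨0, hm⟩)) - gradient (Lf ⟨0, hm⟩) X‖)
          + ‖(m : ℝ)⁻¹ • (∑ j, (gradient (Lf j) (x t) - gradient (Lf j) (x (tj t j))))‖ := by
          gcongr
          exact norm_add_le _ _
      _ ≤ (1 + ρ) * ‖X - x t‖ + L * (‖X - x t‖ + T) + L * T := by linarith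
  have hxtX : ‖x t - X‖ = ‖Δ (t : ℤ)‖ := by rw [hΔt, norm_sub_rev]
  have hXxt : ‖X - x t‖ = ‖Δ (t : ℤ)‖ := by rw [hΔt]
  rw [hS]
  have hΔ0 : 0 ≤ ‖Δ (t : ℤ)‖ := norm_nonneg _
  calc ‖x t - prox zs‖ ≤ ‖x t - X‖ + ‖X - prox zs‖ := htri
    _ ≤ ‖x t - X‖ + ‖(X - u) - zs‖ := by linarith
    _ ≤ ‖Δ (t : ℤ)‖ + ((1 + ρ) * ‖Δ (t : ℤ)‖ + L * (‖Δ (t : ℤ)‖ + T) + L * T) := by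
        rw [hxtX]; rw [hXxt] at hzn; linarith
    _ ≤ (2 + ρ) * ‖Δ (t : ℤ)‖ + 2 * L * (‖Δ (t : ℤ)‖ + T) := by nlinarith
end
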